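/- arXiv:1604.07016 — 7 statements merged into one kernel-verified Lean document; each statement's English description precedes it below -/
import Mathlib

section
/- Let G be a finite simple graph admitting an interval representation and let M be a matching in G. Then the following are equivalent: (1) M is uniquely restricted; (2) there is no alternating cycle of length 4 with respect to M in G; (3) for any two distinct edges e, e' ∈ M, the matching {e, e'} is uniquely restricted in G. -/
/-- The set of vertices matched by a set of edges `M`. -/
def matchedVerts {V : Type*} (M : Set (Sym2 V)) : Set V := {v | ∃ e ∈ M, v ∈ e}

/-- `M` is a matching in the simple graph `G`: a set of edges of `G` no two of which
share an endpoint. -/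
def IsMatchingSet {V : Type*} (G : SimpleGraph V) (M : Set (Sym2 V)) : Prop :=
  M ⊆ G.edgeSet ∧ ∀ e ∈ M, ∀ f ∈ M, e ≠ f → ∀ v : V, v ∈ e → v ∉ f

/-- `M` is a uniquely restricted matching in `G`: a matching such that no other matching
of `G` matches exactly the same set of vertices. -/
def UniquelyRestricted {V : Type*} (G : SimpleGraph V) (M : Set (Sym2 V)) : Prop :=
  IsMatchingSet G M ∧
    ∀ M' : Set (Sym2 V), IsMatchingSet G M' → matchedVerts M' = matchedVerts M → M' = M

/-- The smaller endpoint `l(e)` of an edge `e`. -/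
def eL {V : Type*} [LinearOrder V] (e : Sym2 V) : V :=
  Sym2.lift ⟨fun a b => min a b, fun a b => min_comm a b⟩ e

/-- The larger endpoint `r(e)` of an edge `e`. -/
def eR {V : Type*} [LinearOrder V] (e : Sym2 V) : V :=
  Sym2.lift ⟨fun a b => max a b, fun a b => max_comm a b⟩ e

/-- The linear order on `V` is a proper vertex ordering of `G`:
for `u < v < w`, `uw ∈ E(G)` implies `uv ∈ E(G)` and `vw ∈ E(G)`. -/
def IsProperOrdering {V : Type*} [LinearOrder V] (G : SimpleGraph V) : Prop :=
  ∀ u v w : V, u < v → v < w → G.Adj u w → G.Adj u v ∧ G.Adj v w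

/-- The linear order on `V` is a transitive vertex ordering of `G`. -/
def IsTransitiveOrdering {V : Type*} [LinearOrder V] (G : SimpleGraph V) : Prop :=
  ∀ u v w : V, u < v → v < w →
    ((G.Adj u v → G.Adj v w → G.Adj u w) ∧ (G.Adj u w → G.Adj u v ∨ G.Adj v w))

/-- There is an alternating cycle of length 4 with respect to `M` in `G`. -/
def HasAltC4 {V : Type*} (G : SimpleGraph V) (M : Set (Sym2 V)) : Prop :=
  ∃ u v u' v' : V, u ≠ v ∧ u ≠ u' ∧ u ≠ v' ∧ v ≠ u' ∧ v ≠ v' ∧ u' ≠ v' ∧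
    s(u, v) ∈ M ∧ s(u', v') ∈ M ∧ G.Adj u u' ∧ G.Adj v v'

/-- `G` admits an interval representation by nonempty closed real intervals. -/
def HasIntervalRep {V : Type*} (G : SimpleGraph V) : Prop :=
  ∃ a b : V → ℝ, (∀ v, a v ≤ b v) ∧
    ∀ u v : V, u ≠ v →
      (G.Adj u v ↔ (Set.Icc (a u) (b u) ∩ Set.Icc (a v) (b v)).Nonempty)

/-- The matching `M` starts with the edge `e`. -/
def StartsWith {V : Type*} [LinearOrder V] (M : Set (Sym2 V)) (e : Sym2 V) : Prop :=
  e ∈ M ∧ ∀ f ∈ M, f ≠ e → eL e < eL f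

open Classical in
noncomputable def Mpart {V : Type*} (M : Set (Sym2 V)) (v : V) : V :=
  if h : ∃ u, s(v, u) ∈ M then h.choose else v

lemma Mpart_spec {V : Type*} {M : Set (Sym2 V)} {v : V} (h : v ∈ matchedVerts M) :
    s(v, Mpart M v) ∈ M := by
  obtain ⟨e, heM, hve⟩ := h
  obtain ⟨u, rfl⟩ := Sym2.mem_iff_exists.mp hve
  have hex : ∃ u, s(v, u) ∈ M := ⟨u, heM⟩
  rw [Mpart, dif_pos hex]
  exact hex.choose_spec

lemma Mpart_matched {V : Type*} {M : Set (Sym2 V)} {v : V} (h : v ∈ matchedVerts M) :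
    Mpart M v ∈ matchedVerts M :=
  ⟨_, Mpart_spec h, by simp⟩

lemma Mpart_unique {V : Type*} {G : SimpleGraph V} {M : Set (Sym2 V)}
    (hM : IsMatchingSet G M) {v u : V} (h : s(v, u) ∈ M) : Mpart M v = u := by
  have hv : v ∈ matchedVerts M := ⟨_, h, by simp⟩
  have h2 := Mpart_spec hv
  by_contra hne
  have hne' : s(v, Mpart M v) ≠ s(v, u) := fun hh => hne (Sym2.congr_right.mp hh)
  exact hM.2 _ h2 _ h hne' v (by simp) (by simp)

lemma Mpart_adj {V : Type*} {G : SimpleGraph V} {M : Set (Sym2 V)}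
    (hM : IsMatchingSet G M) {v : V} (h : v ∈ matchedVerts M) : G.Adj v (Mpart M v) :=
  G.mem_edgeSet.mp (hM.1 (Mpart_spec h))

lemma Mpart_invol {V : Type*} {G : SimpleGraph V} {M : Set (Sym2 V)}
    (hM : IsMatchingSet G M) {v : V} (h : v ∈ matchedVerts M) :
    Mpart M (Mpart M v) = v :=
  Mpart_unique hM (by rw [Sym2.eq_swap]; exact Mpart_spec h)

lemma matching_subset {V : Type*} {G : SimpleGraph V} {M N : Set (Sym2 V)}
    (hM : IsMatchingSet G M) (h : N ⊆ M) : IsMatchingSet G N :=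
  ⟨h.trans hM.1, fun e he f hf hne => hM.2 e (h he) f (h hf) hne⟩

lemma hasAltC4_mono {V : Type*} {G : SimpleGraph V} {M N : Set (Sym2 V)}
    (h : M ⊆ N) (hc : HasAltC4 G M) : HasAltC4 G N := by
  obtain ⟨u, v, u', v', h1, h2, h3, h4, h5, h6, he, he', ha, ha'⟩ := hc
  exact ⟨u, v, u', v', h1, h2, h3, h4, h5, h6, h he, h he', ha, ha'⟩

lemma notUR_of_C4 {V : Type*} {G : SimpleGraph V} {M : Set (Sym2 V)}
    (hM : IsMatchingSet G M) (h : HasAltC4 G M) : ¬ UniquelyRestricted G M := by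
  obtain ⟨u, v, u', v', huv, huu', huv', hvu', hvv', hu'v', heM, he'M, hadj1, hadj2⟩ := h
  rintro ⟨-, hUR⟩
  have hold : ∀ f ∈ M, f ≠ s(u, v) → f ≠ s(u', v') → u ∉ f ∧ v ∉ f ∧ u' ∉ f ∧ v' ∉ f := by
    intro f hf hfe hfe'
    exact ⟨hM.2 _ heM f hf (Ne.symm hfe) u (by simp),
      hM.2 _ heM f hf (Ne.symm hfe) v (by simp),
      hM.2 _ he'M f hf (Ne.symm hfe') u' (by simp),
      hM.2 _ he'M f hf (Ne.symm hfe') v' (by simp)⟩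
  set N : Set (Sym2 V) := insert s(u, u') (insert s(v, v') (M \ {s(u, v), s(u', v')}))
    with hN_def
  have hmemN : ∀ g ∈ N, g = s(u, u') ∨ g = s(v, v') ∨
      (g ∈ M ∧ g ≠ s(u, v) ∧ g ≠ s(u', v')) := by
    intro g hg
    rcases hg with rfl | rfl | ⟨hgM, hg2⟩
    · exact Or.inl rfl
    · exact Or.inr (Or.inl rfl)
    · simp only [Set.mem_insert_iff, Set.mem_singleton_iff] at hg2
      push_neg at hg2
      exact Or.inr (Or.inr ⟨hgM, hg2.1, hg2.2⟩)
  have hmem' : ∀ g ∈ N, ∀ t : V, t ∈ g →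
      ((t = u ∨ t = u') ∨ (t = v ∨ t = v') ∨ (t ∈ matchedVerts M ∧
        t ≠ u ∧ t ≠ v ∧ t ≠ u' ∧ t ≠ v')) := by
    intro g hg t htg
    rcases hmemN g hg with rfl | rfl | ⟨hgM, hge, hge'⟩
    · exact Or.inl (Sym2.mem_iff.mp htg)
    · exact Or.inr (Or.inl (Sym2.mem_iff.mp htg))
    · obtain ⟨h1, h2, h3, h4⟩ := hold g hgM hge hge'
      refine Or.inr (Or.inr ⟨⟨g, hgM, htg⟩, ?_, ?_, ?_, ?_⟩) <;>
        rintro rfl <;> first | exact h1 htg | exact h2 htg | exact h3 htg | exact h4 htg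
  have hNmatch : IsMatchingSet G N := by
    constructor
    · intro g hg
      rcases hmemN g hg with rfl | rfl | ⟨hgM, -, -⟩
      · exact G.mem_edgeSet.mpr hadj1
      · exact G.mem_edgeSet.mpr hadj2
      · exact hM.1 hgM
    · intro g hg f hf hgf t htg htf
      rcases hmemN g hg with hgd | hgd | ⟨hgM, hge, hge'⟩ <;>
        rcases hmemN f hf with hfd | hfd | ⟨hfM, hfe, hfe'⟩
      · exact hgf (hgd.trans hfd.symm)
      · rw [hgd] at htg; rw [hfd] at htf
        rcases Sym2.mem_iff.mp htg with rfl | rfl <;>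
          rcases Sym2.mem_iff.mp htf with h | h
        · exact huv h
        · exact huv' h
        · exact hvu' h.symm
        · exact hu'v' h
      · rw [hgd] at htg
        obtain ⟨h1, -, h3, -⟩ := hold f hfM hfe hfe'
        rcases Sym2.mem_iff.mp htg with rfl | rfl
        · exact h1 htf
        · exact h3 htf
      · rw [hgd] at htg; rw [hfd] at htf
        rcases Sym2.mem_iff.mp htg with rfl | rfl <;>
          rcases Sym2.mem_iff.mp htf with h | h
        · exact huv h.symm
        · exact hvu' h
        · exact huv' h.symm
        · exact hu'v' h.symm
      · exact hgf (hgd.trans hfd.symm)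
      · rw [hgd] at htg
        obtain ⟨-, h2, -, h4⟩ := hold f hfM hfe hfe'
        rcases Sym2.mem_iff.mp htg with rfl | rfl
        · exact h2 htf
        · exact h4 htf
      · rw [hfd] at htf
        obtain ⟨h1, -, h3, -⟩ := hold g hgM hge hge'
        rcases Sym2.mem_iff.mp htf with rfl | rfl
        · exact h1 htg
        · exact h3 htg
      · rw [hfd] at htf
        obtain ⟨-, h2, -, h4⟩ := hold g hgM hge hge'
        rcases Sym2.mem_iff.mp htf with rfl | rfl
        · exact h2 htg
        · exact h4 htg
      · exact hM.2 g hgM f hfM hgf t htg htf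
  have hNverts : matchedVerts N = matchedVerts M := by
    ext t
    constructor
    · rintro ⟨g, hg, htg⟩
      rcases hmem' g hg t htg with h | h | h
      · rcases h with h | h
        · exact ⟨s(u, v), heM, Sym2.mem_iff.mpr (Or.inl h)⟩
        · exact ⟨s(u', v'), he'M, Sym2.mem_iff.mpr (Or.inl h)⟩
      · rcases h with h | h
        · exact ⟨s(u, v), heM, Sym2.mem_iff.mpr (Or.inr h)⟩
        · exact ⟨s(u', v'), he'M, Sym2.mem_iff.mpr (Or.inr h)⟩
      · exact h.1
    · rintro ⟨g, hgM, htg⟩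
      by_cases hge : g = s(u, v)
      · rw [hge] at htg
        rcases Sym2.mem_iff.mp htg with h | h
        · exact ⟨s(u, u'), by simp [hN_def], Sym2.mem_iff.mpr (Or.inl h)⟩
        · exact ⟨s(v, v'), by simp [hN_def], Sym2.mem_iff.mpr (Or.inl h)⟩
      · by_cases hge' : g = s(u', v')
        · rw [hge'] at htg
          rcases Sym2.mem_iff.mp htg with h | h
          · exact ⟨s(u, u'), by simp [hN_def], Sym2.mem_iff.mpr (Or.inr h)⟩
          · exact ⟨s(v, v'), by simp [hN_def], Sym2.mem_iff.mpr (Or.inr h)⟩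
        · exact ⟨g, by simp [hN_def, hgM, hge, hge'], htg⟩
  have hNne : N ≠ M := by
    intro hNM
    have huu'M : s(u, u') ∈ M := hNM ▸ (by simp [hN_def] : s(u, u') ∈ N)
    have hne : s(u, u') ≠ s(u, v) := fun hh => hvu' (Sym2.congr_right.mp hh).symm
    exact hM.2 _ huu'M _ heM hne u (by simp) (by simp)
  exact hNne (hUR N hNmatch hNverts)

def IsAltCycle {V : Type*} (G : SimpleGraph V) (M : Set (Sym2 V)) {k : ℕ}
    (x y : ZMod k → V) : Prop :=
  (∀ i j : ZMod k, i ≠ j → s(x i, y i) ≠ s(x j, y j)) ∧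
  (∀ i, s(x i, y i) ∈ M) ∧
  (∀ i, G.Adj (y i) (x (i + 1)))

lemma altCycle_rotate {V : Type*} {G : SimpleGraph V} {M : Set (Sym2 V)} {k : ℕ}
    {x y : ZMod k → V} (hc : IsAltCycle G M x y) (j : ZMod k) :
    IsAltCycle G M (fun i => x (i + j)) (fun i => y (i + j)) := by
  obtain ⟨h1, h2, h3⟩ := hc
  refine ⟨fun i i' hne => h1 _ _ (fun hh => hne (by simpa using hh)), fun i => h2 _, fun i => ?_⟩
  have := h3 (i + j)
  simpa [add_right_comm] using this

lemma altCycle_reverse {V : Type*} {G : SimpleGraph V} {M : Set (Sym2 V)} {k : ℕ}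
    {x y : ZMod k → V} (hc : IsAltCycle G M x y) (j : ZMod k) :
    IsAltCycle G M (fun i => y (j - i)) (fun i => x (j - i)) := by
  obtain ⟨h1, h2, h3⟩ := hc
  refine ⟨fun i i' hne => ?_, fun i => ?_, fun i => ?_⟩
  · intro hh
    rw [Sym2.eq_swap, @Sym2.eq_swap _ (y (j - i'))] at hh
    exact h1 _ _ (fun hq => hne (by simpa using hq)) hh
  · rw [Sym2.eq_swap]; exact h2 _
  · have := (h3 (j - (i + 1))).symm
    have he : j - (i + 1) + 1 = j - i := by ring
    rw [he] at this
    exact this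

lemma altCycle_shorten {V : Type*} {G : SimpleGraph V} {M : Set (Sym2 V)} {k : ℕ}
    (hk : 3 ≤ k) (x y : ZMod k → V) (hc : IsAltCycle G M x y)
    (hcd : G.Adj (x 1) (y (-1))) :
    IsAltCycle G M (k := k - 1)
      (fun i => x ((i.val + 1 : ℕ))) (fun i => y ((i.val + 1 : ℕ))) := by
  haveI : NeZero k := ⟨by omega⟩
  haveI : NeZero (k - 1) := ⟨by omega⟩
  haveI : Fact (1 < k - 1) := ⟨by omega⟩
  obtain ⟨h1, h2, h3⟩ := hc
  have hLinj : ∀ i j : ZMod (k - 1),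
      ((i.val + 1 : ℕ) : ZMod k) = ((j.val + 1 : ℕ) : ZMod k) → i = j := by
    intro i j hh
    have hi : i.val + 1 < k := by have := ZMod.val_lt i; omega
    have hj : j.val + 1 < k := by have := ZMod.val_lt j; omega
    have := congrArg ZMod.val hh
    rw [ZMod.val_cast_of_lt hi, ZMod.val_cast_of_lt hj] at this
    exact ZMod.val_injective _ (by omega : i.val = j.val)
  refine ⟨fun i j hne => h1 _ _ (fun hh => hne (hLinj _ _ hh)), fun i => h2 _, fun i => ?_⟩
  have hval : (i + 1).val = (i.val + 1) % (k - 1) := by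
    rw [ZMod.val_add, ZMod.val_one]
  by_cases hlt : i.val + 1 < k - 1
  · have h1v : (i + 1).val = i.val + 1 := by rw [hval, Nat.mod_eq_of_lt hlt]
    have hcast : (((i + 1).val + 1 : ℕ) : ZMod k) = ((i.val + 1 : ℕ) : ZMod k) + 1 := by
      rw [h1v]; push_cast; ring
    show G.Adj (y ((i.val + 1 : ℕ))) (x (((i + 1).val + 1 : ℕ)))
    rw [hcast]
    exact h3 _
  · have hie : i.val = k - 2 := by have := ZMod.val_lt i; omega
    have h0 : (i + 1).val = 0 := by
      rw [hval, hie]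
      have : k - 2 + 1 = k - 1 := by omega
      rw [this, Nat.mod_self]
    have hone : (((i + 1).val + 1 : ℕ) : ZMod k) = (1 : ZMod k) := by rw [h0]; push_cast; ring
    have hm1 : ((i.val + 1 : ℕ) : ZMod k) = -1 := by
      rw [hie]
      have heq : k - 2 + 1 + 1 = k := by omega
      have hsum : ((k - 2 + 1 : ℕ) : ZMod k) + 1 = 0 := by
        calc ((k - 2 + 1 : ℕ) : ZMod k) + 1 = ((k - 2 + 1 + 1 : ℕ) : ZMod k) := by push_cast; ring
          _ = 0 := by rw [heq, ZMod.natCast_self]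
      exact eq_neg_of_add_eq_zero_left hsum
    show G.Adj (y ((i.val + 1 : ℕ))) (x (((i + 1).val + 1 : ℕ)))
    rw [hone, hm1]
    exact hcd.symm

lemma altCycle_core {V : Type*} {G : SimpleGraph V} {a b : V → ℝ}
    (hab : ∀ v, a v ≤ b v)
    (hrep : ∀ u v : V, u ≠ v →
      (G.Adj u v ↔ (Set.Icc (a u) (b u) ∩ Set.Icc (a v) (b v)).Nonempty))
    {M : Set (Sym2 V)} (hM : IsMatchingSet G M) {k : ℕ} (hk : 2 ≤ k)
    (x y : ZMod k → V) (hc : IsAltCycle G M x y)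
    (hminx : ∀ i, b (y 0) ≤ b (x i)) (hminy : ∀ i, b (y 0) ≤ b (y i)) :
    HasAltC4 G M ∨ (3 ≤ k ∧ G.Adj (x 1) (y (-1))) := by
  haveI : NeZero k := ⟨by omega⟩
  haveI : Fact (1 < k) := ⟨by omega⟩
  obtain ⟨h1, h2, h3⟩ := hc
  -- basic distinctness
  have hdis : ∀ i j : ZMod k, i ≠ j →
      (x i ≠ x j ∧ x i ≠ y j) ∧ (y i ≠ x j ∧ y i ≠ y j) := by
    intro i j hij
    have hne := h1 i j hij
    have hx := hM.2 _ (h2 i) _ (h2 j) hne (x i) (by simp)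
    have hy := hM.2 _ (h2 i) _ (h2 j) hne (y i) (by simp)
    simp only [Sym2.mem_iff, not_or] at hx hy
    exact ⟨hx, hy⟩
  have hxy : ∀ i, x i ≠ y i := fun i => (G.mem_edgeSet.mp (hM.1 (h2 i))).ne
  have hadjE : ∀ i, G.Adj (x i) (y i) := fun i => G.mem_edgeSet.mp (hM.1 (h2 i))
  have h01 : (0 : ZMod k) ≠ 1 := by
    intro hh
    have := congrArg ZMod.val hh
    rw [ZMod.val_zero, ZMod.val_one] at this
    omega
  -- common point from adjacency
  have hint : ∀ {s t : V}, G.Adj s t → ∃ r, a s ≤ r ∧ r ≤ b s ∧ a t ≤ r ∧ r ≤ b t := by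
    intro s t h
    obtain ⟨r, hr⟩ := (hrep s t h.ne).mp h
    exact ⟨r, hr.1.1, hr.1.2, hr.2.1, hr.2.2⟩
  have hadj_of : ∀ {s t : V}, s ≠ t → ∀ r : ℝ, a s ≤ r → r ≤ b s → a t ≤ r → r ≤ b t →
      G.Adj s t := by
    intro s t hne r h1' h2' h3' h4'
    exact (hrep s t hne).mpr ⟨r, ⟨h1', h2'⟩, ⟨h3', h4'⟩⟩
  have hzc : G.Adj (y 0) (x 1) := by have := h3 0; rwa [zero_add] at this
  rcases Nat.lt_or_ge k 3 with hk2 | hk3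
  · -- k = 2 : immediate C4
    have hkk : k = 2 := by omega
    subst hkk
    left
    have h110 : (1 + 1 : ZMod 2) = 0 := by decide
    have hadj2 : G.Adj (x 0) (y 1) := by
      have := h3 1; rw [h110] at this; exact this.symm
    obtain ⟨⟨d1, d2⟩, d3, d4⟩ := hdis 0 1 h01
    exact ⟨y 0, x 0, x 1, y 1, (hxy 0).symm, d3, d4, d1, d2, hxy 1,
      by rw [Sym2.eq_swap]; exact h2 0, h2 1, hzc, hadj2⟩
  · -- k ≥ 3
    have h1m1 : (1 : ZMod k) ≠ -1 := by
      intro hh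
      have h20 : ((2 : ℕ) : ZMod k) = 0 := by
        have : (1 : ZMod k) + 1 = 0 := by nth_rewrite 1 [hh]; exact neg_add_cancel 1
        calc ((2 : ℕ) : ZMod k) = 1 + 1 := by push_cast; ring
          _ = 0 := this
      have := (CharP.cast_eq_zero_iff (ZMod k) k 2).mp h20
      have := Nat.le_of_dvd (by norm_num) this
      omega
    have h0m1 : (0 : ZMod k) ≠ -1 := by
      intro hh
      have : (1 : ZMod k) = 0 := by rw [← neg_neg (1 : ZMod k), ← hh, neg_zero]
      exact h01 this.symm
    set bz := b (y 0) with hbz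
    -- bz in interval of x 0 and x 1
    have hz_p : a (x 0) ≤ bz := by
      obtain ⟨r, hr1, hr2, hr3, hr4⟩ := hint (hadjE 0)
      exact hr1.trans hr4
    have hz_c : a (x 1) ≤ bz := by
      obtain ⟨r, hr1, hr2, hr3, hr4⟩ := hint hzc
      exact hr3.trans hr2
    obtain ⟨⟨dpq1, dpq2⟩, -, -⟩ := hdis 0 1 h01
    by_cases hpq : G.Adj (x 0) (y 1)
    · left
      obtain ⟨⟨d1, d2⟩, d3, d4⟩ := hdis 0 1 h01
      exact ⟨y 0, x 0, x 1, y 1, (hxy 0).symm, d3, d4, d1, d2, hxy 1,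
        by rw [Sym2.eq_swap]; exact h2 0, h2 1, hzc, hpq⟩
    · right
      refine ⟨hk3, ?_⟩
      have hcd_ne : x 1 ≠ y (-1) := ((hdis 1 (-1) h1m1).1).2
      have haq : bz < a (y 1) := by
        by_contra hle
        push_neg at hle
        exact hpq (hadj_of dpq2 bz hz_p (hminx 0) hle (hminy 1))
      have hbc : a (y 1) ≤ b (x 1) := by
        obtain ⟨r, hr1, hr2, hr3, hr4⟩ := hint (hadjE 1)
        exact hr3.trans hr2
      have hdp : G.Adj (y (-1)) (x 0) := by
        have := h3 (-1); rwa [neg_add_cancel] at this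
      by_cases had : a (y (-1)) ≤ bz
      · exact hadj_of hcd_ne bz hz_c (hminx 1) had (hminy (-1))
      · push_neg at had
        have hbp : a (y (-1)) ≤ b (x 0) := by
          obtain ⟨r, hr1, hr2, hr3, hr4⟩ := hint hdp
          exact hr1.trans hr4
        by_cases h3' : a (y 1) ≤ a (y (-1))
        · exact absurd (hadj_of dpq2 (a (y 1)) (hz_p.trans haq.le) (h3'.trans hbp)
            le_rfl (hab (y 1))) hpq
        · push_neg at h3'
          exact hadj_of hcd_ne (a (y (-1))) (hz_c.trans had.le) (h3'.le.trans hbc)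
            le_rfl (hab (y (-1)))

lemma altCycle_to_C4 {V : Type*} [Fintype V] {G : SimpleGraph V} {a b : V → ℝ}
    (hab : ∀ v, a v ≤ b v)
    (hrep : ∀ u v : V, u ≠ v →
      (G.Adj u v ↔ (Set.Icc (a u) (b u) ∩ Set.Icc (a v) (b v)).Nonempty))
    {M : Set (Sym2 V)} (hM : IsMatchingSet G M) :
    ∀ k : ℕ, 2 ≤ k → ∀ x y : ZMod k → V, IsAltCycle G M x y → HasAltC4 G M := by
  intro k
  induction k using Nat.strong_induction_on with
  | _ k IH =>
    intro hk x y hc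
    haveI : NeZero k := ⟨by omega⟩
    obtain ⟨p, -, hpmin⟩ := Finset.exists_min_image (Finset.univ : Finset (ZMod k × Bool))
      (fun q => b (if q.2 then y q.1 else x q.1)) ⟨(0, true), Finset.mem_univ _⟩
    obtain ⟨j, bb⟩ := p
    have hmin : ∀ q : ZMod k × Bool,
        b (if bb then y j else x j) ≤ b (if q.2 then y q.1 else x q.1) :=
      fun q => hpmin q (Finset.mem_univ _)
    cases bb with
    | true =>
      set x' : ZMod k → V := fun i => x (i + j) with hx'
      set y' : ZMod k → V := fun i => y (i + j) with hy'
      have hc' : IsAltCycle G M x' y' := altCycle_rotate hc j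
      have hminx : ∀ i, b (y' 0) ≤ b (x' i) := by
        intro i
        have := hmin ((i + j), false)
        simpa [hx', hy', zero_add] using this
      have hminy : ∀ i, b (y' 0) ≤ b (y' i) := by
        intro i
        have := hmin ((i + j), true)
        simpa [hx', hy', zero_add] using this
      rcases altCycle_core hab hrep hM hk x' y' hc' hminx hminy with h | ⟨hk3, hcd⟩
      · exact h
      · exact IH (k - 1) (by omega) (by omega) _ _ (altCycle_shorten hk3 x' y' hc' hcd)
    | false =>
      set x' : ZMod k → V := fun i => y (j - i) with hx'
      set y' : ZMod k → V := fun i => x (j - i) with hy'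
      have hc' : IsAltCycle G M x' y' := altCycle_reverse hc j
      have hminx : ∀ i, b (y' 0) ≤ b (x' i) := by
        intro i
        have := hmin ((j - i), true)
        simpa [hx', hy', sub_zero] using this
      have hminy : ∀ i, b (y' 0) ≤ b (y' i) := by
        intro i
        have := hmin ((j - i), false)
        simpa [hx', hy', sub_zero] using this
      rcases altCycle_core hab hrep hM hk x' y' hc' hminx hminy with h | ⟨hk3, hcd⟩
      · exact h
      · exact IH (k - 1) (by omega) (by omega) _ _ (altCycle_shorten hk3 x' y' hc' hcd)

def vseq {V : Type*} (f f' : V → V) (u : V) : ℕ → V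
  | 0 => u
  | t + 1 => if t % 2 = 0 then f (vseq f f' u t) else f' (vseq f f' u t)

lemma eq_of_noC4 {V : Type*} [Fintype V] {G : SimpleGraph V} {a b : V → ℝ}
    (hab : ∀ v, a v ≤ b v)
    (hrep : ∀ u v : V, u ≠ v →
      (G.Adj u v ↔ (Set.Icc (a u) (b u) ∩ Set.Icc (a v) (b v)).Nonempty))
    {M : Set (Sym2 V)} (hM : IsMatchingSet G M) (hnC4 : ¬ HasAltC4 G M)
    (M' : Set (Sym2 V)) (hM' : IsMatchingSet G M')
    (hW' : matchedVerts M' = matchedVerts M) : M' = M := by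
  classical
  by_contra hne
  -- find an edge of M not in M'
  have hex : ∃ e ∈ M, e ∉ M' := by
    by_contra hsub
    push_neg at hsub
    obtain ⟨g, hgM', hgM⟩ := Set.not_subset.mp
      (show ¬M' ⊆ M from fun hh => hne (Set.Subset.antisymm hh hsub))
    revert hgM' hgM
    induction g using Sym2.ind with
    | _ α β =>
      intro hgM' hgM
      have hα : α ∈ matchedVerts M := by
        rw [← hW']; exact ⟨_, hgM', by simp⟩
      obtain ⟨e, heM, hαe⟩ := hα
      have heg : e ≠ s(α, β) := fun hh => hgM (hh ▸ heM)
      exact hM'.2 e (hsub e heM) _ hgM' heg α hαe (by simp)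
  obtain ⟨e₀, he₀M, he₀M'⟩ := hex
  revert he₀M he₀M'
  induction e₀ using Sym2.ind with
  | _ u w =>
  intro he₀M he₀M'
  set W := matchedVerts M with hWdef
  set f := Mpart M with hf
  set f' := Mpart M' with hf'
  have hu : u ∈ W := ⟨_, he₀M, by simp⟩
  have hfu : f u = w := Mpart_unique hM he₀M
  set v : ℕ → V := vseq f f' u with hv
  have hv0 : v 0 = u := rfl
  have hvS : ∀ t, v (t + 1) = if t % 2 = 0 then f (v t) else f' (v t) := fun t => rfl
  have hvW : ∀ t, v t ∈ W := by
    intro t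
    induction t with
    | zero => exact hu
    | succ t IH =>
      rw [hvS]
      split_ifs
      · exact Mpart_matched IH
      · have h1 : v t ∈ matchedVerts M' := by rw [hW']; exact IH
        have := Mpart_matched h1
        rwa [hW'] at this
  have hvW' : ∀ t, v t ∈ matchedVerts M' := fun t => by rw [hW']; exact hvW t
  have hstep0 : ∀ t, t % 2 = 0 → v (t + 1) = f (v t) := fun t h => by rw [hvS, if_pos h]
  have hstep1 : ∀ t, t % 2 = 1 → v (t + 1) = f' (v t) := fun t h => by
    rw [hvS, if_neg (by omega)]
  have hinv0 : ∀ t, t % 2 = 0 → f (v (t + 1)) = v t := fun t h => by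
    rw [hstep0 t h]; exact Mpart_invol hM (hvW t)
  have hinv1 : ∀ t, t % 2 = 1 → f' (v (t + 1)) = v t := fun t h => by
    rw [hstep1 t h]; exact Mpart_invol hM' (hvW' t)
  have hMedge : ∀ t, t % 2 = 0 → s(v t, v (t + 1)) ∈ M := fun t h => by
    rw [hstep0 t h]; exact Mpart_spec (hvW t)
  have hM'edge : ∀ t, t % 2 = 1 → s(v t, v (t + 1)) ∈ M' := fun t h => by
    rw [hstep1 t h]; exact Mpart_spec (hvW' t)
  have hadj : ∀ t, G.Adj (v t) (v (t + 1)) := by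
    intro t
    rcases Nat.mod_two_eq_zero_or_one t with h | h
    · exact G.mem_edgeSet.mp (hM.1 (hMedge t h))
    · exact G.mem_edgeSet.mp (hM'.1 (hM'edge t h))
  have hback : ∀ s t, s % 2 = t % 2 → v (s + 1) = v (t + 1) → v s = v t := by
    intro s t hpar heq
    by_cases h : s % 2 = 0
    · rw [← hinv0 s h, ← hinv0 t (by omega), heq]
    · rw [← hinv1 s (by omega), ← hinv1 t (by omega), heq]
  have hbackd : ∀ d s t, s % 2 = t % 2 → v (s + d) = v (t + d) → v s = v t := by
    intro d
    induction d with
    | zero => intro s t _ h; exact h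
    | succ d IH =>
      intro s t hpar heq
      exact IH s t hpar (hback (s + d) (t + d) (by omega) heq)
  have hper : ∃ n, 0 < n ∧ v (2 * n) = u := by
    obtain ⟨i, j, hij, heq⟩ :=
      Finite.exists_ne_map_eq_of_infinite (fun i : ℕ => v (2 * i))
    rcases Nat.lt_or_ge i j with h | h
    · refine ⟨j - i, by omega, ?_⟩
      have := hbackd (2 * i) (2 * (j - i)) 0 (by omega)
        (by rw [show 2 * (j - i) + 2 * i = 2 * j by omega, zero_add]; exact heq.symm)
      rwa [hv0] at this
    · have hji : j < i := by omega
      refine ⟨i - j, by omega, ?_⟩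
      have := hbackd (2 * j) (2 * (i - j)) 0 (by omega)
        (by rw [show 2 * (i - j) + 2 * j = 2 * i by omega, zero_add]; exact heq)
      rwa [hv0] at this
  set k := Nat.find hper with hkdef
  obtain ⟨hk0, hvk⟩ := Nat.find_spec hper
  have hk2 : 2 ≤ k := by
    rcases Nat.lt_or_ge k 2 with h | h
    · exfalso
      have hk1 : k = 1 := by omega
      have hv1 : v 1 = f u := by rw [← hv0]; exact hstep0 0 rfl
      have he' : s(v 1, v 2) ∈ M' := hM'edge 1 rfl
      rw [show (2 : ℕ) = 2 * k by omega] at he'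
      rw [hvk, hv1, hfu, Sym2.eq_swap] at he'
      exact he₀M' he'
    · exact h
  have hee : ∀ i j : ℕ, i < j → j < k → v (2 * i) ≠ v (2 * j) := by
    intro i j hij hjk heq
    have hvji : v (2 * (j - i)) = u := by
      have := hbackd (2 * i) (2 * (j - i)) 0 (by omega)
        (by rw [show 2 * (j - i) + 2 * i = 2 * j by omega, zero_add]; exact heq.symm)
      rwa [hv0] at this
    exact Nat.find_min hper (show j - i < k by omega) ⟨by omega, hvji⟩
  have hodd : ∀ d, d % 2 = 1 → ∀ s, v (s + d) ≠ v s := by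
    intro d
    induction d using Nat.strong_induction_on with
    | _ d IHd =>
      intro hd s heq
      rcases Nat.lt_or_ge d 2 with hd1 | hd3
      · have : d = 1 := by omega
        rw [this] at heq
        exact (hadj s).ne heq.symm
      · obtain ⟨e, rfl⟩ : ∃ e, d = e + 2 := ⟨d - 2, by omega⟩
        have hpar : (s + e + 1) % 2 = s % 2 := by omega
        have heq' : v (s + 1 + e) = v (s + 1) := by
          by_cases h : s % 2 = 0
          · have h1 : v (s + 1) = f (v s) := hstep0 s h
            have h2 : f (v (s + e + 1 + 1)) = v (s + e + 1) := hinv0 (s + e + 1) (by omega)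
            have h3 : v (s + e + 1 + 1) = v s := by
              rw [show s + e + 1 + 1 = s + (e + 2) by omega]; exact heq
            rw [show s + 1 + e = s + e + 1 by omega, ← h2, h3, ← h1]
          · have h1 : v (s + 1) = f' (v s) := hstep1 s (by omega)
            have h2 : f' (v (s + e + 1 + 1)) = v (s + e + 1) := hinv1 (s + e + 1) (by omega)
            have h3 : v (s + e + 1 + 1) = v s := by
              rw [show s + e + 1 + 1 = s + (e + 2) by omega]; exact heq
            rw [show s + 1 + e = s + e + 1 by omega, ← h2, h3, ← h1]
        exact IHd e (by omega) (by omega) (s + 1) heq'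
  haveI : NeZero k := ⟨by omega⟩
  haveI : Fact (1 < k) := ⟨by omega⟩
  set X : ZMod k → V := fun i => v (2 * i.val) with hX
  set Y : ZMod k → V := fun i => v (2 * i.val + 1) with hY
  have hX1 : ∀ i : ZMod k, X (i + 1) = v (2 * i.val + 2) := by
    intro i
    have hval : (i + 1).val = (i.val + 1) % k := by rw [ZMod.val_add, ZMod.val_one]
    by_cases h : i.val + 1 < k
    · have : (i + 1).val = i.val + 1 := by rw [hval, Nat.mod_eq_of_lt h]
      rw [hX]
      show v (2 * (i + 1).val) = v (2 * i.val + 2)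
      rw [this, show 2 * (i.val + 1) = 2 * i.val + 2 by omega]
    · have hik : i.val = k - 1 := by have := ZMod.val_lt i; omega
      have h0 : (i + 1).val = 0 := by
        rw [hval, hik, show k - 1 + 1 = k by omega, Nat.mod_self]
      rw [hX]
      show v (2 * (i + 1).val) = v (2 * i.val + 2)
      rw [h0, hik, show 2 * (k - 1) + 2 = 2 * k by omega, show 2 * 0 = 0 by omega, hv0, hvk]
  have hXne : ∀ i j : ZMod k, i ≠ j → X i ≠ X j := by
    intro i j hij heq
    have hvij : i.val ≠ j.val := fun hh => hij (ZMod.val_injective _ hh)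
    rcases Nat.lt_or_ge i.val j.val with h | h
    · exact hee i.val j.val h (ZMod.val_lt j) heq
    · exact hee j.val i.val (by omega) (ZMod.val_lt i) heq.symm
  have hXYne : ∀ i j : ZMod k, X i ≠ Y j := by
    intro i j heq
    rcases Nat.lt_or_ge (2 * i.val) (2 * j.val + 1) with h | h
    · exact hodd (2 * j.val + 1 - 2 * i.val) (by omega) (2 * i.val)
        (by rw [show 2 * i.val + (2 * j.val + 1 - 2 * i.val) = 2 * j.val + 1 by omega]
            exact heq.symm)
    · exact hodd (2 * i.val - (2 * j.val + 1)) (by omega) (2 * j.val + 1)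
        (by rw [show 2 * j.val + 1 + (2 * i.val - (2 * j.val + 1)) = 2 * i.val by omega]
            exact heq)
  have hcyc : IsAltCycle G M X Y := by
    refine ⟨?_, ?_, ?_⟩
    · intro i j hij heq
      rcases Sym2.eq_iff.mp heq with ⟨h1, -⟩ | ⟨h1, -⟩
      · exact hXne i j hij h1
      · exact hXYne i j h1
    · intro i
      exact hMedge (2 * i.val) (by omega)
    · intro i
      rw [hX1]
      exact hadj (2 * i.val + 1)
  exact absurd (altCycle_to_C4 hab hrep hM k hk2 X Y hcyc) hnC4

theorem stmt1 {V : Type*} [Fintype V] (G : SimpleGraph V) (hG : HasIntervalRep G)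
    (M : Set (Sym2 V)) (hM : IsMatchingSet G M) :
    (UniquelyRestricted G M ↔ ¬ HasAltC4 G M) ∧
      (UniquelyRestricted G M ↔
        ∀ e ∈ M, ∀ e' ∈ M, e ≠ e' → UniquelyRestricted G {e, e'}) := by
  obtain ⟨a, b, hab, hrep⟩ := hG
  have hC : ∀ N : Set (Sym2 V), IsMatchingSet G N → ¬ HasAltC4 G N → UniquelyRestricted G N :=
    fun N hN hn => ⟨hN, fun N' hN' hv => eq_of_noC4 hab hrep hN hn N' hN' hv⟩
  have h1 : UniquelyRestricted G M ↔ ¬ HasAltC4 G M :=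
    ⟨fun hUR hC4 => absurd hUR (notUR_of_C4 hM hC4), hC M hM⟩
  refine ⟨h1, h1.trans ⟨?_, ?_⟩⟩
  · intro hn e he e' he' hee'
    have hsub : ({e, e'} : Set (Sym2 V)) ⊆ M := by
      intro g hg
      simp only [Set.mem_insert_iff, Set.mem_singleton_iff] at hg
      rcases hg with rfl | rfl
      · exact he
      · exact he'
    exact hC {e, e'} (matching_subset hM hsub) (fun hC4p => hn (hasAltC4_mono hsub hC4p))
  · intro hpairs hC4
    obtain ⟨u, v, u', v', h1', h2', h3', h4', h5', h6', heM, he'M, ha1, ha2⟩ := hC4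
    have hne : s(u, v) ≠ s(u', v') := by
      intro hh
      rcases Sym2.eq_iff.mp hh with ⟨ha, -⟩ | ⟨ha, -⟩
      · exact h2' ha
      · exact h3' ha
    have hsub : ({s(u, v), s(u', v')} : Set (Sym2 V)) ⊆ M := by
      intro g hg
      simp only [Set.mem_insert_iff, Set.mem_singleton_iff] at hg
      rcases hg with rfl | rfl
      · exact heM
      · exact he'M
    have hpC4 : HasAltC4 G {s(u, v), s(u', v')} :=
      ⟨u, v, u', v', h1', h2', h3', h4', h5', h6', by simp, by simp, ha1, ha2⟩
    exact notUR_of_C4 (matching_subset hM hsub) hpC4 (hpairs _ heM _ he'M hne)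
end

section
/- Let G be a finite simple graph with a proper vertex ordering < and let e, e' be edges of G such that {e, e'} is a uniquely restricted matching in G. Then either r(e) < l(e') or r(e') < l(e). -/
lemma key {V : Type*} [LinearOrder V] (G : SimpleGraph V)
    (hord : IsProperOrdering G) (a b c d : V)
    (h1 : a < c) (h2 : c < b) (h3 : c < d)
    (Gab : G.Adj a b) (Gcd : G.Adj c d)
    (hur : UniquelyRestricted G {s(a,b), s(c,d)}) : False := by
  have hne : s(a,b) ≠ s(c,d) := by
    intro h
    rw [Sym2.eq_iff] at h
    rcases h with ⟨h4, _⟩ | ⟨h4, _⟩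
    · exact h1.ne h4
    · exact (h1.trans h3).ne h4
  have hdisj := hur.1.2 s(a,b) (by simp) s(c,d) (by simp) hne
  have had : a ≠ d := fun h => (hdisj a (by simp)) (by simp [h])
  have hbd : b ≠ d := fun h => (hdisj b (by simp)) (by simp [h])
  have Gac : G.Adj a c := (hord a c b h1 h2 Gab).1
  have Gbd : G.Adj b d := by
    rcases hbd.lt_or_gt with h | h
    · exact (hord c b d h2 h Gcd).2
    · exact ((hord a d b (h1.trans h3) h Gab).2).symm
  have nab : a ≠ b := Gab.ne
  have nac : a ≠ c := h1.ne
  have ncb : c ≠ b := h2.ne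
  have ncd : c ≠ d := h3.ne
  have hM : IsMatchingSet G {s(a,c), s(b,d)} := by
    constructor
    · rintro x (rfl | rfl)
      · exact Gac
      · exact Gbd
    · rintro f (rfl | rfl) g (rfl | rfl) hfg v hvf
      · exact absurd rfl hfg
      · rw [Sym2.mem_iff] at hvf ⊢
        push_neg
        rcases hvf with rfl | rfl
        · exact ⟨nab, had⟩
        · exact ⟨ncb, ncd⟩
      · rw [Sym2.mem_iff] at hvf ⊢
        push_neg
        rcases hvf with rfl | rfl
        · exact ⟨nab.symm, ncb.symm⟩
        · exact ⟨had.symm, ncd.symm⟩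
      · exact absurd rfl hfg
  have hV : matchedVerts {s(a,c), s(b,d)} = matchedVerts {s(a,b), s(c,d)} := by
    ext v
    simp only [matchedVerts, Set.mem_setOf_eq, Set.mem_insert_iff, Set.mem_singleton_iff]
    constructor
    · rintro ⟨f, (rfl | rfl), h⟩ <;> rw [Sym2.mem_iff] at h <;> rcases h with h | h
      · exact ⟨s(a,b), Or.inl rfl, by simp [Sym2.mem_iff, h]⟩
      · exact ⟨s(c,d), Or.inr rfl, by simp [Sym2.mem_iff, h]⟩
      · exact ⟨s(a,b), Or.inl rfl, by simp [Sym2.mem_iff, h]⟩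
      · exact ⟨s(c,d), Or.inr rfl, by simp [Sym2.mem_iff, h]⟩
    · rintro ⟨f, (rfl | rfl), h⟩ <;> rw [Sym2.mem_iff] at h <;> rcases h with h | h
      · exact ⟨s(a,c), Or.inl rfl, by simp [Sym2.mem_iff, h]⟩
      · exact ⟨s(b,d), Or.inr rfl, by simp [Sym2.mem_iff, h]⟩
      · exact ⟨s(a,c), Or.inl rfl, by simp [Sym2.mem_iff, h]⟩
      · exact ⟨s(b,d), Or.inr rfl, by simp [Sym2.mem_iff, h]⟩
  have heq := hur.2 _ hM hV
  have hmem : s(a,c) ∈ ({s(a,b), s(c,d)} : Set (Sym2 V)) := by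
    rw [← heq]; simp
  simp only [Set.mem_insert_iff, Set.mem_singleton_iff, Sym2.eq_iff] at hmem
  rcases hmem with (⟨_, h5⟩ | ⟨_, h5⟩) | (⟨h4, _⟩ | ⟨h4, _⟩)
  · exact ncb h5
  · exact nac h5.symm
  · exact nac h4
  · exact had h4

lemma main_aux {V : Type*} [LinearOrder V] (G : SimpleGraph V)
    (hord : IsProperOrdering G) (a b c d : V)
    (hab : a < b) (hcd : c < d) (Gab : G.Adj a b) (Gcd : G.Adj c d)
    (hne : s(a,b) ≠ s(c,d))
    (hur : UniquelyRestricted G {s(a,b), s(c,d)}) : b < c ∨ d < a := by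
  by_contra hcon
  push_neg at hcon
  obtain ⟨hcb, had⟩ := hcon
  have hdisj := hur.1.2 s(a,b) (by simp) s(c,d) (by simp) hne
  have nac : a ≠ c := fun h => (hdisj a (by simp)) (by simp [h])
  have nbc : b ≠ c := fun h => (hdisj b (by simp)) (by simp [h])
  have nad : a ≠ d := fun h => (hdisj a (by simp)) (by simp [h])
  have hcb' : c < b := hcb.lt_of_ne nbc.symm
  have had' : a < d := had.lt_of_ne nad
  rcases nac.lt_or_gt with h | h
  · exact key G hord a b c d h hcb' hcd Gab Gcd hur
  · refine key G hord c d a b h had' hab Gcd Gab ?_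
    rw [Set.pair_comm] at hur
    exact hur

theorem stmt2 {V : Type*} [Fintype V] [LinearOrder V] (G : SimpleGraph V)
    (hord : IsProperOrdering G) (e e' : Sym2 V)
    (he : e ∈ G.edgeSet) (he' : e' ∈ G.edgeSet) (hne : e ≠ e')
    (hur : UniquelyRestricted G {e, e'}) :
    eR e < eL e' ∨ eR e' < eL e := by
  induction e using Sym2.ind with
  | _ a b =>
  induction e' using Sym2.ind with
  | _ c d =>
  have Gab : G.Adj a b := he
  have Gcd : G.Adj c d := he'
  have h1 : s(a,b) = s(min a b, max a b) := by
    rcases le_total a b with h | h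
    · rw [min_eq_left h, max_eq_right h]
    · rw [min_eq_right h, max_eq_left h, Sym2.eq_swap]
  have h2 : s(c,d) = s(min c d, max c d) := by
    rcases le_total c d with h | h
    · rw [min_eq_left h, max_eq_right h]
    · rw [min_eq_right h, max_eq_left h, Sym2.eq_swap]
  have G1 : G.Adj (min a b) (max a b) := by
    rw [← SimpleGraph.mem_edgeSet, ← h1]; exact Gab
  have G2 : G.Adj (min c d) (max c d) := by
    rw [← SimpleGraph.mem_edgeSet, ← h2]; exact Gcd
  have hL1 : eL s(a,b) = min a b := rfl
  have hR1 : eR s(a,b) = max a b := rfl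
  have hL2 : eL s(c,d) = min c d := rfl
  have hR2 : eR s(c,d) = max c d := rfl
  rw [hL1, hR1, hL2, hR2]
  have hlt1 : min a b < max a b := min_lt_max.2 Gab.ne
  have hlt2 : min c d < max c d := min_lt_max.2 Gcd.ne
  have := main_aux G hord (min a b) (max a b) (min c d) (max c d) hlt1 hlt2 G1 G2
    (by rw [← h1, ← h2]; exact hne) (by rw [← h1, ← h2]; exact hur)
  tauto
end

section
/- Let G be a finite simple graph with a proper vertex ordering < and let e, e' be two distinct edges of G. Then {e, e'} is a uniquely restricted matching in G if and only if (l(e) and l(e') are distinct and nonadjacent in G) or (r(e) and r(e') are distinct and nonadjacent in G). -/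
lemma edge_decomp {V : Type*} [LinearOrder V] {G : SimpleGraph V} {e : Sym2 V}
    (he : e ∈ G.edgeSet) : eL e < eR e ∧ G.Adj (eL e) (eR e) ∧ e = s(eL e, eR e) := by
  induction e using Sym2.inductionOn with
  | hf x y =>
    simp only [SimpleGraph.mem_edgeSet] at he
    have hxy : x ≠ y := he.ne
    simp only [eL, eR, Sym2.lift_mk]
    rcases hxy.lt_or_gt with h | h
    · simp only [min_eq_left h.le, max_eq_right h.le]
      exact ⟨h, he, by simp⟩
    · simp only [min_eq_right h.le, max_eq_left h.le]
      refine ⟨h, he.symm, ?_⟩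
      rw [Sym2.eq_swap]

lemma matching_partner {V : Type*} {G : SimpleGraph V} {M' : Set (Sym2 V)}
    (hM' : IsMatchingSet G M') {v : V} (hv : v ∈ matchedVerts M') :
    ∃ w, G.Adj v w ∧ s(v, w) ∈ M' := by
  obtain ⟨f, hf, hvf⟩ := hv
  have hspec := Sym2.other_spec hvf
  have hedge : f ∈ G.edgeSet := hM'.1 hf
  rw [← hspec] at hedge hf
  exact ⟨Sym2.Mem.other hvf, hedge, hf⟩

lemma matching_pair_eq {V : Type*} {G : SimpleGraph V} {M' : Set (Sym2 V)}
    (hM' : IsMatchingSet G M') {p q r s : V}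
    (hpq : s(p,q) ∈ M') (hrs : s(r,s) ∈ M')
    (hmv : matchedVerts M' ⊆ {p, q, r, s}) :
    M' = {s(p,q), s(r,s)} := by
  ext h
  constructor
  · intro hh
    have hu : h.out.1 ∈ h := Sym2.out_fst_mem h
    have hmem : h.out.1 ∈ ({p, q, r, s} : Set V) := hmv ⟨h, hh, hu⟩
    have key : ∀ f ∈ M', h.out.1 ∈ f → h = f := by
      intro f hf huf
      by_contra hne
      exact hM'.2 h hh f hf hne _ hu huf
    simp only [Set.mem_insert_iff, Set.mem_singleton_iff] at hmem
    rcases hmem with h1 | h1 | h1 | h1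
    · exact Or.inl (key _ hpq (by rw [h1] at hu ⊢; exact Sym2.mem_mk_left p q))
    · exact Or.inl (key _ hpq (by rw [h1]; exact Sym2.mem_mk_right p q))
    · exact Or.inr (key _ hrs (by rw [h1]; exact Sym2.mem_mk_left r s))
    · exact Or.inr (key _ hrs (by rw [h1]; exact Sym2.mem_mk_right r s))
  · rintro (rfl | rfl) <;> assumption

lemma matching_classify {V : Type*} {G : SimpleGraph V} {a b a' b' : V}
    (hab : a ≠ b) (haa' : a ≠ a') (hab' : a ≠ b') (hba' : b ≠ a') (hbb' : b ≠ b')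
    (ha'b' : a' ≠ b') {M' : Set (Sym2 V)}
    (hM' : IsMatchingSet G M')
    (hmv : matchedVerts M' = {a, b, a', b'}) :
    (M' = {s(a,b), s(a',b')} ∧ G.Adj a b ∧ G.Adj a' b') ∨
    (M' = {s(a,a'), s(b,b')} ∧ G.Adj a a' ∧ G.Adj b b') ∨
    (M' = {s(a,b'), s(b,a')} ∧ G.Adj a b' ∧ G.Adj b a') := by
  have hmem4 : ∀ {v w : V}, s(v,w) ∈ M' → w ∈ ({a, b, a', b'} : Set V) := by
    intro v w hvw
    rw [← hmv]
    exact ⟨_, hvw, Sym2.mem_mk_right v w⟩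
  have hdisj : ∀ {v w v' w' : V}, s(v,w) ∈ M' → s(v',w') ∈ M' → v' ∉ s(v,w) →
      w' ≠ v ∧ w' ≠ w := by
    intro v w v' w' h1 h2 hv'
    have hne : s(v',w') ≠ s(v,w) := by
      intro h; exact hv' (h ▸ Sym2.mem_mk_left v' w')
    have := hM'.2 _ h2 _ h1 hne w' (Sym2.mem_mk_right v' w')
    rw [Sym2.mem_iff] at this
    push_neg at this
    exact this
  have ha : a ∈ matchedVerts M' := by rw [hmv]; simp
  obtain ⟨x, hax, hxM⟩ := matching_partner hM' ha
  have hx4 := hmem4 hxM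
  have hxa : x ≠ a := hax.ne'
  simp only [Set.mem_insert_iff, Set.mem_singleton_iff] at hx4
  have ha'mv : a' ∈ matchedVerts M' := by rw [hmv]; simp
  have hbmv : b ∈ matchedVerts M' := by rw [hmv]; simp
  rcases hx4 with h0 | h0 | h0 | h0
  · exact absurd h0 hxa
  all_goals rw [h0] at hxM hax
  · -- x = b : f = s(a,b); partner of a'
    obtain ⟨y, ha'y, hyM⟩ := matching_partner hM' ha'mv
    have hy4 := hmem4 hyM
    have ha'nab : a' ∉ s(a,b) := by rw [Sym2.mem_iff]; push_neg; exact ⟨haa'.symm, hba'.symm⟩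
    have ⟨hya, hyb⟩ := hdisj hxM hyM ha'nab
    have hya' : y ≠ a' := ha'y.ne'
    simp only [Set.mem_insert_iff, Set.mem_singleton_iff] at hy4
    rcases hy4 with h1 | h1 | h1 | h1
    · exact absurd h1 hya
    · exact absurd h1 hyb
    · exact absurd h1 hya'
    rw [h1] at hyM ha'y
    refine Or.inl ⟨matching_pair_eq hM' hxM hyM (by rw [hmv]), hax, ha'y⟩
  · -- x = a' : f = s(a,a'); partner of b
    obtain ⟨y, hby, hyM⟩ := matching_partner hM' hbmv
    have hy4 := hmem4 hyM
    have hbn : b ∉ s(a,a') := by rw [Sym2.mem_iff]; push_neg; exact ⟨hab.symm, hba'⟩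
    have ⟨hya, hya'⟩ := hdisj hxM hyM hbn
    have hyb : y ≠ b := hby.ne'
    simp only [Set.mem_insert_iff, Set.mem_singleton_iff] at hy4
    rcases hy4 with h1 | h1 | h1 | h1
    · exact absurd h1 hya
    · exact absurd h1 hyb
    · exact absurd h1 hya'
    rw [h1] at hyM hby
    · refine Or.inr (Or.inl ⟨matching_pair_eq hM' hxM hyM ?_, hax, hby⟩)
      rw [hmv]; intro v hv; simp only [Set.mem_insert_iff, Set.mem_singleton_iff] at hv ⊢; tauto
  · -- x = b' : f = s(a,b'); partner of b
    obtain ⟨y, hby, hyM⟩ := matching_partner hM' hbmv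
    have hy4 := hmem4 hyM
    have hbn : b ∉ s(a,b') := by rw [Sym2.mem_iff]; push_neg; exact ⟨hab.symm, hbb'⟩
    have ⟨hya, hyb'⟩ := hdisj hxM hyM hbn
    have hyb : y ≠ b := hby.ne'
    simp only [Set.mem_insert_iff, Set.mem_singleton_iff] at hy4
    rcases hy4 with h1 | h1 | h1 | h1
    · exact absurd h1 hya
    · exact absurd h1 hyb
    · rw [h1] at hyM hby
      refine Or.inr (Or.inr ⟨matching_pair_eq hM' hxM hyM ?_, hax, hby⟩)
      rw [hmv]; intro v hv; simp only [Set.mem_insert_iff, Set.mem_singleton_iff] at hv ⊢; tauto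
    · exact absurd h1 hyb'

lemma pair_is_matching {V : Type*} {G : SimpleGraph V} {p q r t : V}
    (h1 : G.Adj p q) (h2 : G.Adj r t)
    (hpr : p ≠ r) (hps : p ≠ t) (hqr : q ≠ r) (hqs : q ≠ t) :
    IsMatchingSet G {s(p,q), s(r,t)} := by
  constructor
  · rintro f (rfl | rfl)
    · exact h1
    · exact h2
  · rintro f (rfl | rfl) g (rfl | rfl) hfg v hv hv'
    · exact hfg rfl
    · rw [Sym2.mem_iff] at hv hv'
      rcases hv with rfl | rfl <;> rcases hv' with h | h
      · exact hpr h
      · exact hps h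
      · exact hqr h
      · exact hqs h
    · rw [Sym2.mem_iff] at hv hv'
      rcases hv with rfl | rfl <;> rcases hv' with h | h
      · exact hpr h.symm
      · exact hqr h.symm
      · exact hps h.symm
      · exact hqs h.symm
    · exact hfg rfl

lemma matchedVerts_pair {V : Type*} (p q r t : V) :
    matchedVerts {s(p,q), s(r,t)} = {p, q, r, t} := by
  ext v
  simp only [matchedVerts, Set.mem_setOf_eq, Set.mem_insert_iff, Set.mem_singleton_iff]
  constructor
  · rintro ⟨f, (rfl | rfl), hv⟩ <;> rw [Sym2.mem_iff] at hv <;> tauto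
  · rintro (h | h | h | h)
    · exact ⟨s(p,q), Or.inl rfl, by rw [h]; exact Sym2.mem_mk_left p q⟩
    · exact ⟨s(p,q), Or.inl rfl, by rw [h]; exact Sym2.mem_mk_right p q⟩
    · exact ⟨s(r,t), Or.inr rfl, by rw [h]; exact Sym2.mem_mk_left r t⟩
    · exact ⟨s(r,t), Or.inr rfl, by rw [h]; exact Sym2.mem_mk_right r t⟩

lemma cross_lemma {V : Type*} [LinearOrder V] {G : SimpleGraph V}
    (hord : IsProperOrdering G) {a b a' b' : V}
    (hab : a < b) (ha'b' : a' < b') (haa' : a < a') (hba' : b ≠ a') (hbb' : b ≠ b')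
    (h2 : G.Adj a' b') (h3 : G.Adj a b') (h4 : G.Adj b a') :
    G.Adj a a' ∧ G.Adj b b' := by
  constructor
  · exact (hord a a' b' haa' ha'b' h3).1
  · rcases hba'.lt_or_gt with hb | hb
    · -- b < a' : a < b < b'
      exact (hord a b b' (by exact hab) (hb.trans ha'b') h3).2
    · -- a' < b
      rcases hbb'.lt_or_gt with hb2 | hb2
      · -- a' < b < b'
        exact (hord a' b b' hb hb2 h2).2
      · -- a' < b' < b
        exact ((hord a' b' b ha'b' hb2 h4.symm).2).symm

theorem stmt3 {V : Type*} [Fintype V] [LinearOrder V] (G : SimpleGraph V)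
    (hord : IsProperOrdering G) (e e' : Sym2 V)
    (he : e ∈ G.edgeSet) (he' : e' ∈ G.edgeSet) (hne : e ≠ e') :
    UniquelyRestricted G {e, e'} ↔
      ((eL e ≠ eL e' ∧ ¬ G.Adj (eL e) (eL e')) ∨
        (eR e ≠ eR e' ∧ ¬ G.Adj (eR e) (eR e'))) := by
  obtain ⟨hab, hadj, hee⟩ := edge_decomp (G := G) he
  obtain ⟨ha'b', hadj', hee'⟩ := edge_decomp (G := G) he'
  set a := eL e with hadef
  set b := eR e with hbdef
  set a' := eL e' with ha'def
  set b' := eR e' with hb'def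
  have hmv : matchedVerts {e, e'} = {a, b, a', b'} := by
    rw [hee, hee']; exact matchedVerts_pair a b a' b'
  constructor
  · -- forward
    intro hUR
    have hmatch := hUR.1
    have hdisj : ∀ v ∈ e, v ∉ e' := hmatch.2 e (by simp) e' (by simp) hne
    have haa' : a ≠ a' := fun h => hdisj a (by rw [hee]; simp) (by rw [hee', ← h]; simp)
    have hab' : a ≠ b' := fun h => hdisj a (by rw [hee]; simp) (by rw [hee', ← h]; simp)
    have hba' : b ≠ a' := fun h => hdisj b (by rw [hee]; simp) (by rw [hee', ← h]; simp)
    have hbb' : b ≠ b' := fun h => hdisj b (by rw [hee]; simp) (by rw [hee', ← h]; simp)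
    by_contra hcon
    push_neg at hcon
    obtain ⟨h1, h2⟩ := hcon
    have hAa : G.Adj a a' := h1 haa'
    have hAb : G.Adj b b' := h2 hbb'
    -- alternative matching
    have hmatch' : IsMatchingSet G {s(a,a'), s(b,b')} :=
      pair_is_matching hAa hAb hab.ne hab' (Ne.symm hba') ha'b'.ne
    have hmveq : matchedVerts {s(a,a'), s(b,b')} = matchedVerts {e, e'} := by
      rw [hmv, matchedVerts_pair]
      ext v
      simp only [Set.mem_insert_iff, Set.mem_singleton_iff]
      tauto
    have := hUR.2 _ hmatch' hmveq
    have hmem : s(a,a') ∈ ({e, e'} : Set (Sym2 V)) := by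
      rw [← this]; exact Or.inl rfl
    rw [hee, hee'] at hmem
    simp only [Set.mem_insert_iff, Set.mem_singleton_iff, Sym2.eq_iff] at hmem
    rcases hmem with (⟨h1, h2⟩ | ⟨h1, h2⟩) | (⟨h1, h2⟩ | ⟨h1, h2⟩)
    · exact hba' h2.symm
    · exact hab.ne h1
    · exact haa' h1
    · exact hab' h1
  · -- backward
    intro hRHS
    -- four distinct
    have hdist : a ≠ a' ∧ a ≠ b' ∧ b ≠ a' ∧ b ≠ b' := by
      rcases hRHS with ⟨hne1, hnadj⟩ | ⟨hne1, hnadj⟩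
      · refine ⟨hne1, ?_, ?_, ?_⟩
        · intro h; exact hnadj (by rw [h]; exact hadj'.symm)
        · intro h; exact hnadj (by rw [← h]; exact hadj)
        · intro h
          rcases hne1.lt_or_gt with hlt | hlt
          · exact hnadj (hord a a' b hlt (by rw [h]; exact ha'b') hadj).1
          · exact hnadj ((hord a' a b' hlt (by rw [← h]; exact hab) hadj').1).symm
      · refine ⟨?_, ?_, ?_, hne1⟩
        · intro h
          rcases hne1.lt_or_gt with hlt | hlt
          · exact hnadj (hord a b b' hab hlt (by rw [h]; exact hadj')).2
          · exact hnadj ((hord a b' b (by rw [h]; exact ha'b') hlt hadj).2).symm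
        · intro h; exact hnadj (by rw [← h]; exact hadj.symm)
        · intro h; exact hnadj (by rw [h]; exact hadj')
    obtain ⟨haa', hab', hba', hbb'⟩ := hdist
    have hmatch : IsMatchingSet G {e, e'} := by
      rw [hee, hee']
      exact pair_is_matching hadj hadj' haa' hab' hba' hbb'
    refine ⟨hmatch, fun M' hM' hmv' => ?_⟩
    rw [hmv] at hmv'
    rcases matching_classify hab.ne haa' hab' hba' hbb' ha'b'.ne hM' hmv' with
      ⟨hEq, _, _⟩ | ⟨hEq, hAa, hAb⟩ | ⟨hEq, hA1, hA2⟩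
    · rw [hEq, ← hee, ← hee']
    · exfalso
      rcases hRHS with ⟨_, hnadj⟩ | ⟨_, hnadj⟩
      · exact hnadj hAa
      · exact hnadj hAb
    · exfalso
      have hboth : G.Adj a a' ∧ G.Adj b b' := by
        rcases haa'.lt_or_gt with h | h
        · exact cross_lemma hord hab ha'b' h hba' hbb' hadj' hA1 hA2
        · have := cross_lemma hord ha'b' hab h (Ne.symm hab') (Ne.symm hbb') hadj
            hA2.symm hA1.symm
          exact ⟨this.1.symm, this.2.symm⟩
      rcases hRHS with ⟨_, hnadj⟩ | ⟨_, hnadj⟩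
      · exact hnadj hboth.1
      · exact hnadj hboth.2
end

section
/- Let G be a finite simple graph with a proper vertex ordering < and let e₁, e₂, e₃ be pairwise distinct edges of G such that l(e₁) ≤ l(e₂) ≤ l(e₃) and r(e₁) ≤ r(e₂) ≤ r(e₃). If {e₁, e₃} is not a uniquely restricted matching in G, then neither {e₁, e₂} nor {e₂, e₃} is a uniquely restricted matching in G. -/
section Helpers

variable {V : Type*} [LinearOrder V] {G : SimpleGraph V}

lemma edge_repr {e : Sym2 V} (he : e ∈ G.edgeSet) :
    ∃ a b : V, e = s(a, b) ∧ a < b ∧ G.Adj a b ∧ eL e = a ∧ eR e = b := by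
  induction e using Sym2.ind with
  | _ x y =>
    have hadj : G.Adj x y := he
    have hxy : x ≠ y := hadj.ne
    have hL : eL s(x, y) = min x y := Sym2.lift_mk _ x y
    have hR : eR s(x, y) = max x y := Sym2.lift_mk _ x y
    rcases lt_or_gt_of_ne hxy with h | h
    · exact ⟨x, y, rfl, h, hadj, by rw [hL, min_eq_left h.le],
        by rw [hR, max_eq_right h.le]⟩
    · exact ⟨y, x, Sym2.eq_swap, h, hadj.symm, by rw [hL, min_eq_right h.le],
        by rw [hR, max_eq_left h.le]⟩

lemma adjL (hord : IsProperOrdering G) {x y z : V} (hxy : G.Adj x y)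
    (h1 : x < z) (h2 : z ≤ y) : G.Adj x z := by
  rcases eq_or_lt_of_le h2 with rfl | h2
  · exact hxy
  · exact (hord x z y h1 h2 hxy).1

lemma adjR (hord : IsProperOrdering G) {x y z : V} (hxy : G.Adj x y)
    (h1 : x ≤ z) (h2 : z < y) : G.Adj z y := by
  rcases eq_or_lt_of_le h1 with rfl | h1
  · exact hxy
  · exact (hord x z y h1 h2 hxy).2

lemma notUR_shared {p q : Sym2 V} (hpq : p ≠ q) {v : V} (hvp : v ∈ p) (hvq : v ∈ q) :
    ¬ UniquelyRestricted G {p, q} := by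
  rintro ⟨⟨-, hdisj⟩, -⟩
  exact hdisj p (by simp) q (by simp) hpq v hvp hvq

lemma matchedVerts_pair_s4 (a b c d : V) :
    matchedVerts ({s(a, b), s(c, d)} : Set (Sym2 V)) = {a, b, c, d} := by
  ext v
  simp only [matchedVerts, Set.mem_setOf_eq, Set.mem_insert_iff, Set.mem_singleton_iff]
  constructor
  · rintro ⟨e, (rfl | rfl), hv⟩ <;> rcases Sym2.mem_iff.1 hv with rfl | rfl <;> tauto
  · rintro (rfl | rfl | rfl | rfl)
    exacts [⟨s(v, b), Or.inl rfl, by simp⟩, ⟨s(a, v), Or.inl rfl, by simp⟩,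
      ⟨s(v, d), Or.inr rfl, by simp⟩, ⟨s(c, v), Or.inr rfl, by simp⟩]

lemma cross_notUR {x y x' y' : V}
    (hxy : x ≠ y) (hxx : x ≠ x') (hxy' : x ≠ y') (hyx : y ≠ x') (hyy : y ≠ y')
    (hx'y' : x' ≠ y') (h1 : G.Adj x x') (h2 : G.Adj y y') :
    ¬ UniquelyRestricted G {s(x, y), s(x', y')} := by
  rintro ⟨-, huniq⟩
  have hM' : IsMatchingSet G {s(x, x'), s(y, y')} := by
    constructor
    · rintro e (rfl | rfl)
      · exact h1
      · exact h2
    · rintro e (rfl | rfl) f (rfl | rfl) hef v hv hvf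
      · exact hef rfl
      · rcases Sym2.mem_iff.1 hv with rfl | rfl <;> rcases Sym2.mem_iff.1 hvf with h | h
        · exact hxy h
        · exact hxy' h
        · exact hyx h.symm
        · exact hx'y' h
      · rcases Sym2.mem_iff.1 hv with rfl | rfl <;> rcases Sym2.mem_iff.1 hvf with h | h
        · exact hxy h.symm
        · exact hyx h
        · exact hxy' h.symm
        · exact hx'y' h.symm
      · exact hef rfl
  have hverts : matchedVerts ({s(x, x'), s(y, y')} : Set (Sym2 V)) =
      matchedVerts ({s(x, y), s(x', y')} : Set (Sym2 V)) := by
    rw [matchedVerts_pair_s4, matchedVerts_pair_s4]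
    ext v
    simp only [Set.mem_insert_iff, Set.mem_singleton_iff]
    tauto
  have hEq := huniq _ hM' hverts
  have hmem : s(x, x') ∈ ({s(x, y), s(x', y')} : Set (Sym2 V)) := by
    rw [← hEq]; exact Or.inl rfl
  rcases hmem with h | h
  · rcases Sym2.eq_iff.1 h with ⟨-, h'⟩ | ⟨h', -⟩
    · exact hyx h'.symm
    · exact hxy h'
  · rcases Sym2.eq_iff.1 h with ⟨h', -⟩ | ⟨h', -⟩
    · exact hxx h'
    · exact hxy' h'

lemma notUR_of_cross1 {a b c d : V} (hab : a ≠ b) (hcd : c ≠ d)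
    (hnsh : ∀ v, v ∈ s(a, b) → v ∉ s(c, d))
    (h1 : G.Adj a c) (h2 : G.Adj b d) :
    ¬ UniquelyRestricted G {s(a, b), s(c, d)} :=
  cross_notUR hab h1.ne (fun h => hnsh a (by simp) (by simp [h]))
    (fun h => hnsh b (by simp) (by simp [h])) h2.ne hcd h1 h2

lemma notUR_of_cross2 {a b c d : V} (hab : a ≠ b) (hcd : c ≠ d)
    (hnsh : ∀ v, v ∈ s(a, b) → v ∉ s(c, d))
    (h1 : G.Adj a d) (h2 : G.Adj b c) :
    ¬ UniquelyRestricted G {s(a, b), s(c, d)} := by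
  rw [show s(c, d) = s(d, c) from Sym2.eq_swap]
  exact cross_notUR hab h1.ne (fun h => hnsh a (by simp) (by simp [h]))
    (fun h => hnsh b (by simp) (by simp [h])) h2.ne (Ne.symm hcd) h1 h2

lemma extract_cross {a b c d : V} {M' : Set (Sym2 V)} (hM : IsMatchingSet G M')
    (hab : a ≠ b) (hac : a ≠ c) (had : a ≠ d) (hbc : b ≠ c) (hbd : b ≠ d) (hcd : c ≠ d)
    (hv : matchedVerts M' = {a, b, c, d}) (hne : M' ≠ {s(a, b), s(c, d)}) :
    (G.Adj a c ∧ G.Adj b d) ∨ (G.Adj a d ∧ G.Adj b c) := by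
  have mem4 : ∀ w : V, w ∈ matchedVerts M' → w = a ∨ w = b ∨ w = c ∨ w = d := by
    intro w hw; rw [hv] at hw; simpa using hw
  have getedge : ∀ w : V, w ∈ ({a, b, c, d} : Set V) →
      ∃ z, z ≠ w ∧ s(w, z) ∈ M' ∧ G.Adj w z ∧ (z = a ∨ z = b ∨ z = c ∨ z = d) := by
    intro w hw
    have hw' : w ∈ matchedVerts M' := by rw [hv]; exact hw
    obtain ⟨f, hf, hwf⟩ := hw'
    have hspec := Sym2.other_spec hwf
    have hfe : G.Adj w (Sym2.Mem.other hwf) := by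
      have := hM.1 hf
      rwa [← hspec] at this
    refine ⟨Sym2.Mem.other hwf, (hfe.ne).symm, by rwa [hspec], hfe, ?_⟩
    exact mem4 _ ⟨f, hf, Sym2.other_mem hwf⟩
  obtain ⟨x, hxa, hfa, hax, hx4⟩ := getedge a (by simp)
  rcases hx4 with hx | hx | hx | hx
  · exact absurd hx hxa
  · -- a is matched to b in M'; then c must be matched to d, so M' = {s(a,b),s(c,d)}
    rw [hx] at hfa hax
    exfalso
    obtain ⟨y, hyc, hgc, hcy, hy4⟩ := getedge c (by simp)
    have hfg : s(a, b) ≠ s(c, y) := fun hEq => by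
      rcases Sym2.eq_iff.1 hEq with ⟨h1, -⟩ | ⟨-, h2⟩
      · exact hac h1
      · exact hbc h2
    have hya : y ≠ a := fun hEq =>
      hM.2 _ hfa _ hgc hfg a (by simp) (Sym2.mem_iff.2 (Or.inr hEq.symm))
    have hyb : y ≠ b := fun hEq =>
      hM.2 _ hfa _ hgc hfg b (by simp) (Sym2.mem_iff.2 (Or.inr hEq.symm))
    have hyd : y = d := by
      rcases hy4 with h' | h' | h' | h'
      · exact absurd h' hya
      · exact absurd h' hyb
      · exact absurd h' hyc
      · exact h'
    rw [hyd] at hgc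
    apply hne
    ext e
    constructor
    · intro hh
      by_contra hcon
      simp only [Set.mem_insert_iff, Set.mem_singleton_iff, not_or] at hcon
      have hp : (Quot.out e).1 ∈ e := Sym2.out_fst_mem e
      have h1 := hM.2 e hh _ hfa hcon.1 _ hp
      have h2 := hM.2 e hh _ hgc hcon.2 _ hp
      rcases mem4 _ ⟨e, hh, hp⟩ with hq | hq | hq | hq <;> rw [hq] at h1 h2
      · exact h1 (by simp)
      · exact h1 (by simp)
      · exact h2 (by simp)
      · exact h2 (by simp)
    · rintro (rfl | rfl)
      · exact hfa
      · exact hgc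
  · -- a matched to c, so b must be matched to d
    rw [hx] at hfa hax
    obtain ⟨y, hyb, hgb, hby, hy4⟩ := getedge b (by simp)
    have hfg : s(a, c) ≠ s(b, y) := fun hEq => by
      rcases Sym2.eq_iff.1 hEq with ⟨h1, -⟩ | ⟨-, h2⟩
      · exact hab h1
      · exact hbc h2.symm
    have hya : y ≠ a := fun hEq =>
      hM.2 _ hfa _ hgb hfg a (by simp) (Sym2.mem_iff.2 (Or.inr hEq.symm))
    have hyc : y ≠ c := fun hEq =>
      hM.2 _ hfa _ hgb hfg c (by simp) (Sym2.mem_iff.2 (Or.inr hEq.symm))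
    have hyd : y = d := by
      rcases hy4 with h' | h' | h' | h'
      · exact absurd h' hya
      · exact absurd h' hyb
      · exact absurd h' hyc
      · exact h'
    rw [hyd] at hby
    exact Or.inl ⟨hax, hby⟩
  · -- a matched to d, so b must be matched to c
    rw [hx] at hfa hax
    obtain ⟨y, hyb, hgb, hby, hy4⟩ := getedge b (by simp)
    have hfg : s(a, d) ≠ s(b, y) := fun hEq => by
      rcases Sym2.eq_iff.1 hEq with ⟨h1, -⟩ | ⟨-, h2⟩
      · exact hab h1
      · exact hbd h2.symm
    have hya : y ≠ a := fun hEq =>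
      hM.2 _ hfa _ hgb hfg a (by simp) (Sym2.mem_iff.2 (Or.inr hEq.symm))
    have hyd : y ≠ d := fun hEq =>
      hM.2 _ hfa _ hgb hfg d (by simp) (Sym2.mem_iff.2 (Or.inr hEq.symm))
    have hyc : y = c := by
      rcases hy4 with h' | h' | h' | h'
      · exact absurd h' hya
      · exact absurd h' hyb
      · exact h'
      · exact absurd h' hyd
    rw [hyc] at hby
    exact Or.inr ⟨hax, hby⟩

end Helpers

theorem stmt4 {V : Type*} [Fintype V] [LinearOrder V] (G : SimpleGraph V)
    (hord : IsProperOrdering G) (e₁ e₂ e₃ : Sym2 V)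
    (he₁ : e₁ ∈ G.edgeSet) (he₂ : e₂ ∈ G.edgeSet) (he₃ : e₃ ∈ G.edgeSet)
    (h12 : e₁ ≠ e₂) (h13 : e₁ ≠ e₃) (h23 : e₂ ≠ e₃)
    (hl12 : eL e₁ ≤ eL e₂) (hl23 : eL e₂ ≤ eL e₃)
    (hr12 : eR e₁ ≤ eR e₂) (hr23 : eR e₂ ≤ eR e₃)
    (h : ¬ UniquelyRestricted G {e₁, e₃}) :
    ¬ UniquelyRestricted G {e₁, e₂} ∧ ¬ UniquelyRestricted G {e₂, e₃} := by
  obtain ⟨a₁, b₁, rfl, h₁, hadj₁, hL₁, hR₁⟩ := edge_repr he₁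
  obtain ⟨a₂, b₂, rfl, h₂, hadj₂, hL₂, hR₂⟩ := edge_repr he₂
  obtain ⟨a₃, b₃, rfl, h₃, hadj₃, hL₃, hR₃⟩ := edge_repr he₃
  rw [hL₁, hL₂] at hl12
  rw [hL₂, hL₃] at hl23
  rw [hR₁, hR₂] at hr12
  rw [hR₂, hR₃] at hr23
  clear hL₁ hL₂ hL₃ hR₁ hR₂ hR₃ he₁ he₂ he₃
  by_cases hm : IsMatchingSet G {s(a₁, b₁), s(a₃, b₃)}
  · -- {e₁, e₃} is a matching; extract the alternating C4
    rw [UniquelyRestricted] at h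
    push_neg at h
    obtain ⟨M', hM', hveq, hMne⟩ := h hm
    have hnsh13 : ∀ v, v ∈ s(a₁, b₁) → v ∉ s(a₃, b₃) :=
      fun v hv => hm.2 _ (Or.inl rfl) _ (Or.inr rfl) h13 v hv
    have da : a₁ ≠ a₃ := fun hEq => hnsh13 a₁ (by simp) (by simp [hEq])
    have db : a₁ ≠ b₃ := fun hEq => hnsh13 a₁ (by simp) (by simp [hEq])
    have dc : b₁ ≠ a₃ := fun hEq => hnsh13 b₁ (by simp) (by simp [hEq])
    have dd : b₁ ≠ b₃ := fun hEq => hnsh13 b₁ (by simp) (by simp [hEq])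
    rw [matchedVerts_pair_s4] at hveq
    rcases extract_cross hM' h₁.ne da db dc dd h₃.ne hveq hMne with ⟨hac, hbd⟩ | ⟨had, hbc⟩
    · constructor
      · by_cases hsh : ∃ v, v ∈ s(a₁, b₁) ∧ v ∈ s(a₂, b₂)
        · obtain ⟨v, hv1, hv2⟩ := hsh
          exact notUR_shared h12 hv1 hv2
        · push_neg at hsh
          have ha : a₁ < a₂ := lt_of_le_of_ne hl12 (fun hEq => hsh a₁ (by simp) (by simp [hEq]))
          have hb : b₁ < b₂ := lt_of_le_of_ne hr12 (fun hEq => hsh b₁ (by simp) (by simp [hEq]))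
          exact notUR_of_cross1 h₁.ne h₂.ne hsh (adjL hord hac ha hl23) (adjL hord hbd hb hr23)
      · by_cases hsh : ∃ v, v ∈ s(a₂, b₂) ∧ v ∈ s(a₃, b₃)
        · obtain ⟨v, hv1, hv2⟩ := hsh
          exact notUR_shared h23 hv1 hv2
        · push_neg at hsh
          have ha : a₂ < a₃ := lt_of_le_of_ne hl23 (fun hEq => hsh a₂ (by simp) (by simp [hEq]))
          have hb : b₂ < b₃ := lt_of_le_of_ne hr23 (fun hEq => hsh b₂ (by simp) (by simp [hEq]))
          exact notUR_of_cross1 h₂.ne h₃.ne hsh (adjR hord hac hl12 ha) (adjR hord hbd hr12 hb)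
    · constructor
      · by_cases hsh : ∃ v, v ∈ s(a₁, b₁) ∧ v ∈ s(a₂, b₂)
        · obtain ⟨v, hv1, hv2⟩ := hsh
          exact notUR_shared h12 hv1 hv2
        · push_neg at hsh
          have ha : a₁ < a₂ := lt_of_le_of_ne hl12 (fun hEq => hsh a₁ (by simp) (by simp [hEq]))
          have hb : b₁ < b₂ := lt_of_le_of_ne hr12 (fun hEq => hsh b₁ (by simp) (by simp [hEq]))
          have hab2 : G.Adj a₁ b₂ := adjL hord had (h₁.trans_le hr12) hr23
          have hba2 : G.Adj b₁ a₂ := by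
            rcases lt_trichotomy a₂ b₁ with hlt | hEq | hlt
            · exact ((hord a₁ a₂ b₁ ha hlt hadj₁).2).symm
            · exact absurd (hsh b₁ (by simp) (by simp [← hEq])) not_false
            · exact adjL hord hbc hlt hl23
          exact notUR_of_cross2 h₁.ne h₂.ne hsh hab2 hba2
      · by_cases hsh : ∃ v, v ∈ s(a₂, b₂) ∧ v ∈ s(a₃, b₃)
        · obtain ⟨v, hv1, hv2⟩ := hsh
          exact notUR_shared h23 hv1 hv2
        · push_neg at hsh
          have ha : a₂ < a₃ := lt_of_le_of_ne hl23 (fun hEq => hsh a₂ (by simp) (by simp [hEq]))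
          have hb : b₂ < b₃ := lt_of_le_of_ne hr23 (fun hEq => hsh b₂ (by simp) (by simp [hEq]))
          have hab3 : G.Adj a₂ b₃ := adjR hord had hl12 (ha.trans h₃)
          have hba3 : G.Adj b₂ a₃ := by
            rcases lt_trichotomy b₂ a₃ with hlt | hEq | hlt
            · exact adjR hord hbc hr12 hlt
            · exact absurd (hsh b₂ (by simp) (by simp [hEq])) not_false
            · exact ((hord a₂ a₃ b₂ ha hlt hadj₂).2).symm
          exact notUR_of_cross2 h₂.ne h₃.ne hsh hab3 hba3
  · -- {e₁, e₃} is not a matching: e₁ and e₃ share a vertex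
    have hm' := hm
    rw [IsMatchingSet] at hm'
    push_neg at hm'
    have hsub : ({s(a₁, b₁), s(a₃, b₃)} : Set (Sym2 V)) ⊆ G.edgeSet := by
      rintro e (rfl | rfl)
      · exact hadj₁
      · exact hadj₃
    obtain ⟨p, hp, q, hq, hpq, v, hvp, hvq⟩ := hm' hsub
    have hv13 : v ∈ s(a₁, b₁) ∧ v ∈ s(a₃, b₃) := by
      rcases hp with rfl | rfl <;> rcases hq with rfl | rfl
      · exact absurd rfl hpq
      · exact ⟨hvp, hvq⟩
      · exact ⟨hvq, hvp⟩
      · exact absurd rfl hpq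
    rcases Sym2.mem_iff.1 hv13.1 with hv1 | hv1 <;>
      rcases Sym2.mem_iff.1 hv13.2 with hv3 | hv3
    · -- v = a₁ = a₃
      have h13' : a₁ = a₃ := hv1.symm.trans hv3
      have ha21 : a₂ = a₁ := le_antisymm (by rw [h13']; exact hl23) hl12
      constructor
      · exact notUR_shared h12 (Sym2.mem_mk_left a₁ b₁)
          (Sym2.mem_iff.2 (Or.inl ha21.symm))
      · exact notUR_shared h23 (Sym2.mem_mk_left a₂ b₂)
          (Sym2.mem_iff.2 (Or.inl (ha21.trans h13')))
    · -- v = a₁ = b₃ : impossible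
      exact absurd (hv1.symm.trans hv3) (ne_of_lt (lt_of_lt_of_le h₁ (hr12.trans hr23)))
    · -- v = b₁ = a₃
      have hba : b₁ = a₃ := hv1.symm.trans hv3
      have hl23' : a₂ ≤ b₁ := by rw [hba]; exact hl23
      have hadj₃' : G.Adj b₁ b₃ := by rw [hba]; exact hadj₃
      constructor
      · by_cases hsh : ∃ w, w ∈ s(a₁, b₁) ∧ w ∈ s(a₂, b₂)
        · obtain ⟨w, hw1, hw2⟩ := hsh
          exact notUR_shared h12 hw1 hw2
        · push_neg at hsh
          have ha : a₁ < a₂ := lt_of_le_of_ne hl12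
            (fun hEq => hsh a₁ (by simp) (Sym2.mem_iff.2 (Or.inl hEq)))
          have ha2b1 : a₂ < b₁ := lt_of_le_of_ne hl23'
            (fun hEq => hsh b₁ (by simp) (Sym2.mem_iff.2 (Or.inl hEq.symm)))
          have hb : b₁ < b₂ := lt_of_le_of_ne hr12
            (fun hEq => hsh b₁ (by simp) (Sym2.mem_iff.2 (Or.inr hEq)))
          exact notUR_of_cross1 h₁.ne h₂.ne hsh (hord a₁ a₂ b₁ ha ha2b1 hadj₁).1
            (hord a₂ b₁ b₂ ha2b1 hb hadj₂).2
      · by_cases hsh : ∃ w, w ∈ s(a₂, b₂) ∧ w ∈ s(a₃, b₃)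
        · obtain ⟨w, hw1, hw2⟩ := hsh
          exact notUR_shared h23 hw1 hw2
        · push_neg at hsh
          have ha2b1 : a₂ < b₁ := lt_of_le_of_ne hl23'
            (fun hEq => hsh a₂ (by simp) (Sym2.mem_iff.2 (Or.inl (hEq.trans hba))))
          have hb1b2 : b₁ < b₂ := lt_of_le_of_ne hr12
            (fun hEq => hsh b₂ (by simp) (Sym2.mem_iff.2 (Or.inl (hEq.symm.trans hba))))
          have hb2b3 : b₂ < b₃ := lt_of_le_of_ne hr23
            (fun hEq => hsh b₂ (by simp) (Sym2.mem_iff.2 (Or.inr hEq)))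
          refine notUR_of_cross1 h₂.ne h₃.ne hsh ?_ ?_
          · rw [← hba]
            exact (hord a₂ b₁ b₂ ha2b1 hb1b2 hadj₂).1
          · exact (hord b₁ b₂ b₃ hb1b2 hb2b3 hadj₃').2
    · -- v = b₁ = b₃
      have hbb : b₁ = b₃ := hv1.symm.trans hv3
      have hb21 : b₂ = b₁ := le_antisymm (by rw [hbb]; exact hr23) hr12
      constructor
      · exact notUR_shared h12 (Sym2.mem_mk_right a₁ b₁)
          (Sym2.mem_iff.2 (Or.inr hb21.symm))
      · exact notUR_shared h23 (Sym2.mem_mk_right a₂ b₂)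
          (Sym2.mem_iff.2 (Or.inr (hb21.trans hbb)))
end

section
/- Let G be a finite simple graph with a proper vertex ordering < and let M = {e₁, e₂, …, e_t} be a matching in G whose edges satisfy l(e₁) < l(e₂) < ⋯ < l(e_t). Then M is a uniquely restricted matching in G if and only if for each i ∈ {1, 2, …, t−1}, the pair {e_i, e_{i+1}} is a uniquely restricted matching in G. -/
/-! ### Auxiliary lemmas -/

section Basics
variable {V : Type*} [LinearOrder V]

@[simp] lemma eL_mk (a b : V) : eL s(a,b) = min a b := rfl
@[simp] lemma eR_mk (a b : V) : eR s(a,b) = max a b := rfl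

lemma eL_of_lt {a b : V} (h : a < b) : eL s(a,b) = a := by simp [min_eq_left h.le]
lemma eR_of_lt {a b : V} (h : a < b) : eR s(a,b) = b := by simp [max_eq_right h.le]

lemma edge_eq (e : Sym2 V) : e = s(eL e, eR e) := by
  induction e using Sym2.inductionOn with
  | hf a b =>
    simp only [eL_mk, eR_mk]
    rcases le_total a b with h | h
    · rw [min_eq_left h, max_eq_right h]
    · rw [min_eq_right h, max_eq_left h, Sym2.eq_swap]

lemma mem_edge {v : V} {e : Sym2 V} : v ∈ e ↔ v = eL e ∨ v = eR e := by
  conv_lhs => rw [edge_eq e]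
  simp [Sym2.mem_iff]

lemma eL_mem (e : Sym2 V) : eL e ∈ e := mem_edge.2 (Or.inl rfl)
lemma eR_mem (e : Sym2 V) : eR e ∈ e := mem_edge.2 (Or.inr rfl)

lemma eL_le_eR (e : Sym2 V) : eL e ≤ eR e := by
  induction e using Sym2.inductionOn with
  | hf a b => exact min_le_max

variable {G : SimpleGraph V}

lemma eL_lt_eR {e : Sym2 V} (he : e ∈ G.edgeSet) : eL e < eR e := by
  rcases (eL_le_eR e).lt_or_eq with h | h
  · exact h
  · exfalso
    have h2 := edge_eq e
    rw [h] at h2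
    rw [h2] at he
    simp at he

lemma adj_of_mem {e : Sym2 V} (he : e ∈ G.edgeSet) : G.Adj (eL e) (eR e) := by
  have h2 := edge_eq e
  rw [h2] at he
  exact he

lemma mem_mV_left {N : Set (Sym2 V)} {u w : V} (h : s(u,w) ∈ N) : u ∈ matchedVerts N :=
  ⟨_, h, Sym2.mem_mk_left _ _⟩

lemma mem_mV_right {N : Set (Sym2 V)} {u w : V} (h : s(u,w) ∈ N) : w ∈ matchedVerts N :=
  ⟨_, h, Sym2.mem_mk_right _ _⟩

lemma unique_partner {N : Set (Sym2 V)} (hN : IsMatchingSet G N) {v w w' : V}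
    (h : s(v,w) ∈ N) (h' : s(v,w') ∈ N) : w = w' := by
  by_contra hne
  have hedge : s(v,w) ≠ s(v,w') := by
    intro hEq
    rcases Sym2.eq_iff.mp hEq with ⟨-, h2⟩ | ⟨h1, h2⟩
    · exact hne h2
    · exact hne (h2.trans h1)
  exact hN.2 _ h _ h' hedge v (Sym2.mem_mk_left _ _) (Sym2.mem_mk_left _ _)

lemma exists_partner {N : Set (Sym2 V)} {v : V} (hv : v ∈ matchedVerts N) :
    ∃ w, s(v,w) ∈ N := by
  obtain ⟨f, hf, hvf⟩ := hv
  exact ⟨Sym2.Mem.other hvf, by rwa [Sym2.other_spec hvf]⟩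

lemma matchedVerts_union {A B : Set (Sym2 V)} :
    matchedVerts (A ∪ B) = matchedVerts A ∪ matchedVerts B := by
  ext v
  constructor
  · rintro ⟨f, hf | hf, hv⟩
    · exact Or.inl ⟨f, hf, hv⟩
    · exact Or.inr ⟨f, hf, hv⟩
  · rintro (⟨f, hf, hv⟩ | ⟨f, hf, hv⟩)
    · exact ⟨f, Or.inl hf, hv⟩
    · exact ⟨f, Or.inr hf, hv⟩

lemma UR_subset {N M : Set (Sym2 V)} (h : UniquelyRestricted G M) (hNM : N ⊆ M) :
    UniquelyRestricted G N := by
  obtain ⟨hm, hu⟩ := h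
  have hNmatch : IsMatchingSet G N :=
    ⟨fun f hf => hm.1 (hNM hf), fun a ha b hb => hm.2 a (hNM ha) b (hNM hb)⟩
  refine ⟨hNmatch, ?_⟩
  intro N₁ hN₁ hmv
  have hK : IsMatchingSet G (N₁ ∪ (M \ N)) := by
    constructor
    · rintro f (hf | hf)
      exacts [hN₁.1 hf, hm.1 hf.1]
    · rintro p (hp | hp) q (hq | hq) hpq z hzp hzq
      · exact hN₁.2 p hp q hq hpq z hzp hzq
      · have hz : z ∈ matchedVerts N := hmv ▸ ⟨p, hp, hzp⟩
        obtain ⟨f, hfN, hzf⟩ := hz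
        rcases eq_or_ne f q with rfl | hne
        · exact hq.2 hfN
        · exact hm.2 f (hNM hfN) q hq.1 hne z hzf hzq
      · have hz : z ∈ matchedVerts N := hmv ▸ ⟨q, hq, hzq⟩
        obtain ⟨f, hfN, hzf⟩ := hz
        rcases eq_or_ne f p with rfl | hne
        · exact hp.2 hfN
        · exact hm.2 f (hNM hfN) p hp.1 hne z hzf hzp
      · exact hm.2 p hp.1 q hq.1 hpq z hzp hzq
  have hmvK : matchedVerts (N₁ ∪ (M \ N)) = matchedVerts M := by
    rw [matchedVerts_union, hmv, ← matchedVerts_union, Set.union_diff_cancel hNM]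
  have hKM := hu _ hK hmvK
  ext f
  constructor
  · intro hf
    have hfM : f ∈ M := hKM ▸ Or.inl hf
    by_contra hfN
    have hz : eL f ∈ matchedVerts N := hmv ▸ ⟨f, hf, eL_mem f⟩
    obtain ⟨g, hgN, hzg⟩ := hz
    rcases eq_or_ne f g with rfl | hne
    · exact hfN hgN
    · exact hm.2 f hfM g (hNM hgN) hne (eL f) (eL_mem f) hzg
  · intro hf
    have hfM : f ∈ M := hNM hf
    have : f ∈ N₁ ∪ (M \ N) := hKM.symm ▸ hfM
    rcases this with h | h
    · exact h
    · exact absurd hf h.2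

lemma pair_not_UR {G : SimpleGraph V} {a b c d : V}
    (hab : G.Adj a b) (hcd : G.Adj c d) (hac : G.Adj a c) (hbd : G.Adj b d)
    (nac : a ≠ c) (nad : a ≠ d) (nbc : b ≠ c) (nbd : b ≠ d) :
    ¬ UniquelyRestricted G {s(a,b), s(c,d)} := by
  rintro ⟨-, hu⟩
  have nab := hab.ne
  have ncd := hcd.ne
  have h1 : IsMatchingSet G {s(a,c), s(b,d)} := by
    constructor
    · intro f hf
      rcases hf with rfl | hf
      · exact hac
      · rw [Set.mem_singleton_iff] at hf; subst hf; exact hbd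
    · intro p hp q hq hpq z hzp hzq
      simp only [Set.mem_insert_iff, Set.mem_singleton_iff] at hp hq
      rcases hp with rfl | rfl <;> rcases hq with rfl | rfl
      · exact hpq rfl
      · rw [Sym2.mem_iff] at hzp hzq
        rcases hzp with h1 | h1 <;> rcases hzq with h2 | h2
        · exact nab (h1.symm.trans h2)
        · exact nad (h1.symm.trans h2)
        · exact nbc (h1.symm.trans h2).symm
        · exact ncd (h1.symm.trans h2)
      · rw [Sym2.mem_iff] at hzp hzq
        rcases hzp with h1 | h1 <;> rcases hzq with h2 | h2
        · exact nab (h1.symm.trans h2).symm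
        · exact nbc (h1.symm.trans h2)
        · exact nad (h1.symm.trans h2).symm
        · exact ncd (h1.symm.trans h2).symm
      · exact hpq rfl
  have h2 : matchedVerts {s(a,c), s(b,d)} = matchedVerts ({s(a,b), s(c,d)} : Set (Sym2 V)) := by
    ext v
    simp only [matchedVerts, Set.mem_setOf_eq, Set.mem_insert_iff, Set.mem_singleton_iff]
    constructor
    · rintro ⟨f, hf | hf, hv⟩ <;> rw [hf, Sym2.mem_iff] at hv
      · rcases hv with h | h
        · exact ⟨s(a,b), Or.inl rfl, by rw [h]; exact Sym2.mem_mk_left _ _⟩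
        · exact ⟨s(c,d), Or.inr rfl, by rw [h]; exact Sym2.mem_mk_left _ _⟩
      · rcases hv with h | h
        · exact ⟨s(a,b), Or.inl rfl, by rw [h]; exact Sym2.mem_mk_right _ _⟩
        · exact ⟨s(c,d), Or.inr rfl, by rw [h]; exact Sym2.mem_mk_right _ _⟩
    · rintro ⟨f, hf | hf, hv⟩ <;> rw [hf, Sym2.mem_iff] at hv
      · rcases hv with h | h
        · exact ⟨s(a,c), Or.inl rfl, by rw [h]; exact Sym2.mem_mk_left _ _⟩
        · exact ⟨s(b,d), Or.inr rfl, by rw [h]; exact Sym2.mem_mk_left _ _⟩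
      · rcases hv with h | h
        · exact ⟨s(a,c), Or.inl rfl, by rw [h]; exact Sym2.mem_mk_right _ _⟩
        · exact ⟨s(b,d), Or.inr rfl, by rw [h]; exact Sym2.mem_mk_right _ _⟩
  have h3 := hu _ h1 h2
  have hmem : s(a,c) ∈ ({s(a,b), s(c,d)} : Set (Sym2 V)) := by
    rw [← h3]; exact Or.inl rfl
  rcases hmem with h | h
  · rcases Sym2.eq_iff.mp h with ⟨-, h2'⟩ | ⟨h1', -⟩
    · exact nbc h2'.symm
    · exact nab h1'
  · rw [Set.mem_singleton_iff] at h
    rcases Sym2.eq_iff.mp h with ⟨h1', -⟩ | ⟨h1', -⟩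
    · exact nac h1'
    · exact nad h1'

lemma swap_matching {G : SimpleGraph V} {N : Set (Sym2 V)} (hN : IsMatchingSet G N)
    {u1 u2 v1 v2 : V} (hf1 : s(u1,u2) ∈ N) (hf2 : s(v1,v2) ∈ N)
    (hne : s(u1,u2) ≠ s(v1,v2)) (h1 : G.Adj u1 v1) (h2 : G.Adj u2 v2) :
    IsMatchingSet G (insert s(u1,v1) (insert s(u2,v2) (N \ {s(u1,u2), s(v1,v2)}))) ∧
    matchedVerts (insert s(u1,v1) (insert s(u2,v2) (N \ {s(u1,u2), s(v1,v2)})))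
      = matchedVerts N := by
  have hu12 : u1 ≠ u2 := ((SimpleGraph.mem_edgeSet G).mp (hN.1 hf1)).ne
  have hv12 : v1 ≠ v2 := ((SimpleGraph.mem_edgeSet G).mp (hN.1 hf2)).ne
  have hkey : ∀ z, z ∈ s(u1,u2) → z ∉ s(v1,v2) := hN.2 _ hf1 _ hf2 hne
  have hu1f2 : u1 ∉ s(v1,v2) := hkey u1 (Sym2.mem_mk_left _ _)
  have hu2f2 : u2 ∉ s(v1,v2) := hkey u2 (Sym2.mem_mk_right _ _)
  have hu1v1 : u1 ≠ v1 := fun h => hu1f2 (by rw [h]; exact Sym2.mem_mk_left _ _)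
  have hu1v2 : u1 ≠ v2 := fun h => hu1f2 (by rw [h]; exact Sym2.mem_mk_right _ _)
  have hu2v1 : u2 ≠ v1 := fun h => hu2f2 (by rw [h]; exact Sym2.mem_mk_left _ _)
  have hu2v2 : u2 ≠ v2 := fun h => hu2f2 (by rw [h]; exact Sym2.mem_mk_right _ _)
  have hN' : ∀ q ∈ N, q ≠ s(u1,u2) → q ≠ s(v1,v2) → ∀ z, z ∈ q →
      z ∉ s(u1,u2) ∧ z ∉ s(v1,v2) := by
    intro q hq hq1 hq2 z hz
    exact ⟨fun hzf => hN.2 q hq _ hf1 hq1 z hz hzf,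
           fun hzf => hN.2 q hq _ hf2 hq2 z hz hzf⟩
  constructor
  · constructor
    · intro f hf
      rcases hf with rfl | hf
      · exact h1
      · rcases hf with rfl | hf
        · exact h2
        · exact hN.1 hf.1
    · intro p hp q hq hpq z hzp hzq
      simp only [Set.mem_insert_iff, Set.mem_diff, Set.mem_singleton_iff] at hp hq
      rcases hp with rfl | rfl | hp <;> rcases hq with rfl | rfl | hq
      · exact hpq rfl
      · rw [Sym2.mem_iff] at hzp hzq
        rcases hzp with e1 | e1 <;> rcases hzq with e2 | e2
        · exact hu12 (e1.symm.trans e2)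
        · exact hu1v2 (e1.symm.trans e2)
        · exact hu2v1 (e1.symm.trans e2).symm
        · exact hv12 (e1.symm.trans e2)
      · rw [Sym2.mem_iff] at hzp
        have hd := hN' q hq.1 (by push_neg at hq; exact hq.2.1) (by push_neg at hq; exact hq.2.2) z hzq
        rcases hzp with e1 | e1
        · exact hd.1 (by rw [← e1]; exact (by rw [e1]; exact Sym2.mem_mk_left _ _))
        · exact hd.2 (by rw [e1]; exact Sym2.mem_mk_left _ _)
      · rw [Sym2.mem_iff] at hzp hzq
        rcases hzp with e1 | e1 <;> rcases hzq with e2 | e2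
        · exact hu12 (e2.symm.trans e1)
        · exact hu2v1 (e1.symm.trans e2)
        · exact hu1v2 (e2.symm.trans e1)
        · exact hv12 (e2.symm.trans e1)
      · exact hpq rfl
      · rw [Sym2.mem_iff] at hzp
        have hd := hN' q hq.1 (by push_neg at hq; exact hq.2.1) (by push_neg at hq; exact hq.2.2) z hzq
        rcases hzp with e1 | e1
        · exact hd.1 (by rw [e1]; exact Sym2.mem_mk_right _ _)
        · exact hd.2 (by rw [e1]; exact Sym2.mem_mk_right _ _)
      · rw [Sym2.mem_iff] at hzq
        have hd := hN' p hp.1 (by push_neg at hp; exact hp.2.1) (by push_neg at hp; exact hp.2.2) z hzp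
        rcases hzq with e1 | e1
        · exact hd.1 (by rw [e1]; exact Sym2.mem_mk_left _ _)
        · exact hd.2 (by rw [e1]; exact Sym2.mem_mk_left _ _)
      · rw [Sym2.mem_iff] at hzq
        have hd := hN' p hp.1 (by push_neg at hp; exact hp.2.1) (by push_neg at hp; exact hp.2.2) z hzp
        rcases hzq with e1 | e1
        · exact hd.1 (by rw [e1]; exact Sym2.mem_mk_right _ _)
        · exact hd.2 (by rw [e1]; exact Sym2.mem_mk_right _ _)
      · exact hN.2 p hp.1 q hq.1 hpq z hzp hzq
  · ext z
    simp only [matchedVerts, Set.mem_setOf_eq]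
    constructor
    · rintro ⟨f, hf, hzf⟩
      simp only [Set.mem_insert_iff, Set.mem_diff, Set.mem_singleton_iff] at hf
      rcases hf with rfl | rfl | hf
      · rw [Sym2.mem_iff] at hzf
        rcases hzf with h | h
        · exact ⟨_, hf1, by rw [h]; exact Sym2.mem_mk_left _ _⟩
        · exact ⟨_, hf2, by rw [h]; exact Sym2.mem_mk_left _ _⟩
      · rw [Sym2.mem_iff] at hzf
        rcases hzf with h | h
        · exact ⟨_, hf1, by rw [h]; exact Sym2.mem_mk_right _ _⟩
        · exact ⟨_, hf2, by rw [h]; exact Sym2.mem_mk_right _ _⟩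
      · exact ⟨f, hf.1, hzf⟩
    · rintro ⟨f, hf, hzf⟩
      by_cases hc1 : f = s(u1,u2)
      · rw [hc1, Sym2.mem_iff] at hzf
        rcases hzf with h | h
        · exact ⟨s(u1,v1), Or.inl rfl, by rw [h]; exact Sym2.mem_mk_left _ _⟩
        · exact ⟨s(u2,v2), Or.inr (Or.inl rfl), by rw [h]; exact Sym2.mem_mk_left _ _⟩
      by_cases hc2 : f = s(v1,v2)
      · rw [hc2, Sym2.mem_iff] at hzf
        rcases hzf with h | h
        · exact ⟨s(u1,v1), Or.inl rfl, by rw [h]; exact Sym2.mem_mk_right _ _⟩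
        · exact ⟨s(u2,v2), Or.inr (Or.inl rfl), by rw [h]; exact Sym2.mem_mk_right _ _⟩
      · exact ⟨f, Or.inr (Or.inr ⟨hf, by simp [hc1, hc2]⟩), hzf⟩

end Basics

section Counting
variable {V : Type*} [Fintype V] [LinearOrder V]

/-- number of elements of `S` in the half-open interval `(u, v]`. -/
noncomputable def cnt (S : Set V) (u v : V) : ℕ := Set.ncard {s | s ∈ S ∧ u < s ∧ s ≤ v}

lemma cnt_add {S : Set V} {u v w : V} (h1 : u ≤ v) (h2 : v ≤ w) :
    cnt S u w = cnt S u v + cnt S v w := by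
  have hdisj : Disjoint {s | s ∈ S ∧ u < s ∧ s ≤ v} {s | s ∈ S ∧ v < s ∧ s ≤ w} := by
    rw [Set.disjoint_left]
    rintro s ⟨-, -, hsv⟩ ⟨-, hvs, -⟩
    exact absurd hvs (not_lt.2 hsv)
  have hun : {s | s ∈ S ∧ u < s ∧ s ≤ w}
      = {s | s ∈ S ∧ u < s ∧ s ≤ v} ∪ {s | s ∈ S ∧ v < s ∧ s ≤ w} := by
    ext s
    simp only [Set.mem_union, Set.mem_setOf_eq]
    constructor
    · rintro ⟨hs, hu, hw⟩
      rcases le_or_gt s v with h | h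
      · exact Or.inl ⟨hs, hu, h⟩
      · exact Or.inr ⟨hs, h, hw⟩
    · rintro (⟨hs, hu, hv⟩ | ⟨hs, hv, hw⟩)
      · exact ⟨hs, hu, hv.trans h2⟩
      · exact ⟨hs, h1.trans_lt hv, hw⟩
  rw [cnt, cnt, cnt, hun, Set.ncard_union_eq hdisj (Set.toFinite _) (Set.toFinite _)]

lemma cnt_pos {S : Set V} {u v : V} (hv : v ∈ S) (huv : u < v) : 0 < cnt S u v := by
  rw [cnt, Set.ncard_pos (Set.toFinite _)]
  exact ⟨v, hv, huv, le_rfl⟩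

/-- total weight of a set of edges. -/
noncomputable def mu (S : Set V) (N : Set (Sym2 V)) : ℕ :=
  ∑ f ∈ (Set.toFinite N).toFinset, cnt S (eL f) (eR f)

lemma mu_swap (S : Set V) {N : Set (Sym2 V)} {f1 f2 g1 g2 : Sym2 V}
    (hf1 : f1 ∈ N) (hf2 : f2 ∈ N) (h12 : f1 ≠ f2)
    (hg1 : g1 ∉ N) (hg2 : g2 ∉ N) (hg12 : g1 ≠ g2) :
    mu S (insert g1 (insert g2 (N \ {f1, f2}))) + cnt S (eL f1) (eR f1)
        + cnt S (eL f2) (eR f2)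
      = mu S N + cnt S (eL g1) (eR g1) + cnt S (eL g2) (eR g2) := by
  classical
  set w : Sym2 V → ℕ := fun f => cnt S (eL f) (eR f) with hw
  have hFeq : (Set.toFinite (insert g1 (insert g2 (N \ {f1, f2})))).toFinset
      = insert g1 (insert g2 (((Set.toFinite N).toFinset.erase f1).erase f2)) := by
    ext q
    simp only [Set.Finite.mem_toFinset, Finset.mem_insert, Finset.mem_erase,
      Set.mem_insert_iff, Set.mem_diff, Set.mem_singleton_iff]
    tauto
  have hg2mem : g2 ∉ ((Set.toFinite N).toFinset.erase f1).erase f2 := by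
    simp only [Finset.mem_erase, Set.Finite.mem_toFinset]
    tauto
  have hg1mem : g1 ∉ insert g2 (((Set.toFinite N).toFinset.erase f1).erase f2) := by
    simp only [Finset.mem_insert, Finset.mem_erase, Set.Finite.mem_toFinset]
    tauto
  have e1 : f1 ∈ (Set.toFinite N).toFinset := by simp only [Set.Finite.mem_toFinset]; exact hf1
  have e2 : f2 ∈ (Set.toFinite N).toFinset.erase f1 := by
    simp only [Finset.mem_erase, Set.Finite.mem_toFinset]
    exact ⟨h12.symm, hf2⟩
  have key1 : mu S (insert g1 (insert g2 (N \ {f1, f2})))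
      = w g1 + (w g2 + ∑ x ∈ ((Set.toFinite N).toFinset.erase f1).erase f2, w x) := by
    rw [mu, hFeq, Finset.sum_insert hg1mem, Finset.sum_insert hg2mem]
  have s1 : ∑ x ∈ (Set.toFinite N).toFinset.erase f1, w x + w f1
      = ∑ x ∈ (Set.toFinite N).toFinset, w x := Finset.sum_erase_add _ _ e1
  have s2 : ∑ x ∈ ((Set.toFinite N).toFinset.erase f1).erase f2, w x + w f2
      = ∑ x ∈ (Set.toFinite N).toFinset.erase f1, w x := Finset.sum_erase_add _ _ e2
  have key2 : mu S N = ∑ x ∈ (Set.toFinite N).toFinset, w x := rfl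
  have hwf1 : w f1 = cnt S (eL f1) (eR f1) := rfl
  have hwf2 : w f2 = cnt S (eL f2) (eR f2) := rfl
  have hwg1 : w g1 = cnt S (eL g1) (eR g1) := rfl
  have hwg2 : w g2 = cnt S (eL g2) (eR g2) := rfl
  omega

end Counting

section Main
variable {V : Type*} [LinearOrder V] {G : SimpleGraph V}

lemma no_crossA (hord : IsProperOrdering G) (t : ℕ) (e : ℕ → Sym2 V)
    (hmono : ∀ i j, i < j → j < t → eL (e i) < eL (e j))
    (hM : IsMatchingSet G (e '' {i | i < t}))
    (hcons : ∀ i, i + 1 < t → UniquelyRestricted G {e i, e (i + 1)}) :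
    ∀ d i j, i < j → j < t → j - i ≤ d →
      G.Adj (eL (e i)) (eL (e j)) → G.Adj (eR (e i)) (eR (e j)) → False := by
  have hedge : ∀ i, i < t → e i ∈ G.edgeSet := fun i hi => hM.1 ⟨i, hi, rfl⟩
  have hdisj : ∀ i j, i < t → j < t → i < j → ∀ z, z ∈ e i → z ∉ e j := by
    intro i j hi hj hij
    have hne : e i ≠ e j := fun h =>
      absurd (hmono i j hij hj) (by rw [h]; exact lt_irrefl _)
    exact hM.2 _ ⟨i, hi, rfl⟩ _ ⟨j, hj, rfl⟩ hne
  have hnn : ∀ i j, i < t → j < t → i < j →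
      eL (e i) ≠ eL (e j) ∧ eL (e i) ≠ eR (e j) ∧ eR (e i) ≠ eL (e j) ∧
        eR (e i) ≠ eR (e j) := by
    intro i j hi hj hij
    have h1 := hdisj i j hi hj hij _ (eL_mem (e i))
    have h2 := hdisj i j hi hj hij _ (eR_mem (e i))
    rw [mem_edge, not_or] at h1 h2
    exact ⟨h1.1, h1.2, h2.1, h2.2⟩
  have consec : ∀ i, i + 1 < t → G.Adj (eL (e i)) (eL (e (i+1))) →
      G.Adj (eR (e i)) (eR (e (i+1))) → False := by
    intro i hi hL hR
    have hU := hcons i hi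
    have hset : ({e i, e (i+1)} : Set (Sym2 V))
        = {s(eL (e i), eR (e i)), s(eL (e (i+1)), eR (e (i+1)))} := by
      rw [← edge_eq, ← edge_eq]
    rw [hset] at hU
    obtain ⟨n1, n2, n3, n4⟩ := hnn i (i+1) (by omega) hi (by omega)
    exact pair_not_UR (adj_of_mem (hedge i (by omega))) (adj_of_mem (hedge (i+1) hi))
      hL hR n1 n2 n3 n4 hU
  intro d
  induction d with
  | zero => intro i j hij hjt hd _ _; omega
  | succ d ih =>
    intro i j hij hjt hd hL hR
    by_cases hj1 : j = i + 1
    · subst hj1; exact consec i hjt hL hR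
    · have hkj : i + 1 < j := by omega
      have h1 : eL (e i) < eL (e (i+1)) := hmono i (i+1) (by omega) (by omega)
      have h2 : eL (e (i+1)) < eL (e j) := hmono (i+1) j hkj hjt
      have hLik : G.Adj (eL (e i)) (eL (e (i+1))) := (hord _ _ _ h1 h2 hL).1
      have hLkj : G.Adj (eL (e (i+1))) (eL (e j)) := (hord _ _ _ h1 h2 hL).2
      obtain ⟨-, -, -, hrr_ik⟩ := hnn i (i+1) (by omega) (by omega) (by omega)
      obtain ⟨-, -, -, hrr_kj⟩ := hnn (i+1) j (by omega) hjt hkj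
      rcases lt_trichotomy (eR (e (i+1))) (eR (e i)) with hlt | heq | hgt
      · have hx : eL (e i) < eR (e (i+1)) := h1.trans (eL_lt_eR (hedge (i+1) (by omega)))
        have hA : G.Adj (eR (e (i+1))) (eR (e i)) :=
          (hord _ _ _ hx hlt (adj_of_mem (hedge i (by omega)))).2
        exact consec i (by omega) hLik hA.symm
      · exact hrr_ik heq.symm
      · rcases lt_trichotomy (eR (e (i+1))) (eR (e j)) with hlt' | heq' | hgt'
        · have hA : G.Adj (eR (e (i+1))) (eR (e j)) := (hord _ _ _ hgt hlt' hR).2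
          exact ih (i+1) j hkj hjt (by omega) hLkj hA
        · exact hrr_kj heq'
        · have hx : eL (e (i+1)) < eR (e j) := h2.trans (eL_lt_eR (hedge j hjt))
          have hA : G.Adj (eR (e j)) (eR (e (i+1))) :=
            (hord _ _ _ hx hgt' (adj_of_mem (hedge (i+1) (by omega)))).2
          exact ih (i+1) j hkj hjt (by omega) hLkj hA.symm

lemma no_cross (hord : IsProperOrdering G) (t : ℕ) (e : ℕ → Sym2 V)
    (hmono : ∀ i j, i < j → j < t → eL (e i) < eL (e j))
    (hM : IsMatchingSet G (e '' {i | i < t}))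
    (hcons : ∀ i, i + 1 < t → UniquelyRestricted G {e i, e (i + 1)})
    {x w p q : V} (hxw : x < w) (hxp : x < p) (hxq : x < q)
    (hf : s(x,w) ∈ e '' {i | i < t}) (hg : s(p,q) ∈ e '' {i | i < t})
    (hadj1 : G.Adj x p) (hadj2 : G.Adj w q) : False := by
  have hfg : s(x,w) ≠ s(p,q) := by
    intro hEq
    have hx : x ∈ s(p,q) := by rw [← hEq]; exact Sym2.mem_mk_left _ _
    rw [Sym2.mem_iff] at hx
    rcases hx with h | h
    · exact absurd hxp (by rw [h]; exact lt_irrefl _)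
    · exact absurd hxq (by rw [h]; exact lt_irrefl _)
  have hdisj := hM.2 _ hf _ hg hfg
  have hwp : w ≠ p := fun h =>
    hdisj w (Sym2.mem_mk_right _ _) (by rw [h]; exact Sym2.mem_mk_left _ _)
  have hpq : p ≠ q := ((SimpleGraph.mem_edgeSet G).mp (hM.1 hg)).ne
  have hA : G.Adj x (eL s(p,q)) ∧ G.Adj w (eR s(p,q)) := by
    rcases lt_trichotomy p q with h | h | h
    · rw [eL_of_lt h, eR_of_lt h]; exact ⟨hadj1, hadj2⟩
    · exact absurd h hpq
    · have heLg : eL s(p,q) = q := by simp [min_eq_right h.le]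
      have heRg : eR s(p,q) = p := by simp [max_eq_left h.le]
      rw [heLg, heRg]
      refine ⟨(hord x q p hxq h hadj1).1, ?_⟩
      rcases lt_trichotomy w p with h' | h' | h'
      · exact (hord x w p hxw h' hadj1).2
      · exact absurd h' hwp
      · exact ((hord q p w h h' hadj2.symm).2).symm
  obtain ⟨i, hi, hei⟩ := hf
  obtain ⟨j, hj, hej⟩ := hg
  have hit : i < t := hi
  have hjt : j < t := hj
  have hij : i ≠ j := fun h => hfg (by rw [← hei, ← hej, h])
  have heLi : eL (e i) = x := by rw [hei, eL_of_lt hxw]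
  have heRi : eR (e i) = w := by rw [hei, eR_of_lt hxw]
  have hLg : x < eL (e j) := by rw [hej, eL_mk]; exact lt_min hxp hxq
  have hij' : i < j := by
    rcases lt_or_gt_of_ne hij with h | h
    · exact h
    · have hcon := hmono j i h hit
      rw [heLi] at hcon
      exact absurd hcon (not_lt.2 hLg.le)
  exact no_crossA hord t e hmono hM hcons (j - i) i j hij' hjt le_rfl
    (by rw [heLi, hej]; exact hA.1) (by rw [heRi, hej]; exact hA.2)

end Main

theorem stmt5 {V : Type*} [Fintype V] [LinearOrder V] (G : SimpleGraph V)
    (hord : IsProperOrdering G) (t : ℕ) (e : ℕ → Sym2 V)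
    (hmono : ∀ i j, i < j → j < t → eL (e i) < eL (e j))
    (hM : IsMatchingSet G (e '' {i | i < t})) :
    UniquelyRestricted G (e '' {i | i < t}) ↔
      ∀ i, i + 1 < t → UniquelyRestricted G {e i, e (i + 1)} := by
  constructor
  · intro hUR i hi
    have hsub : ({e i, e (i+1)} : Set (Sym2 V)) ⊆ e '' {i | i < t} := by
      intro f hf
      rcases hf with rfl | hf
      · exact ⟨i, show i < t by omega, rfl⟩
      · rw [Set.mem_singleton_iff] at hf; subst hf; exact ⟨i+1, hi, rfl⟩
    exact UR_subset hUR hsub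
  · intro hcons
    refine ⟨hM, fun M' hM'first hmv => ?_⟩
    set S := matchedVerts (e '' {i | i < t}) with hS
    have key : ∀ n (N : Set (Sym2 V)), IsMatchingSet G N → matchedVerts N = S →
        mu S N ≤ n → N = e '' {i | i < t} := by
      intro n
      induction n using Nat.strong_induction_on with
      | _ n ih =>
        intro N hN hNS hmuN
        by_cases hNM : N = e '' {i | i < t}
        · exact hNM
        exfalso
        have hDne : {v : V | ∃ a b, s(v,a) ∈ e '' {i | i < t} ∧ s(v,b) ∈ N ∧ a ≠ b}.Nonempty := by
          rw [Set.nonempty_iff_ne_empty]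
          intro hemp
          apply hNM
          have hnoD : ∀ v a b, s(v,a) ∈ e '' {i | i < t} → s(v,b) ∈ N → a = b := by
            intro v a b h1 h2
            by_contra hne
            have hvD : v ∈ {v : V | ∃ a b, s(v,a) ∈ e '' {i | i < t} ∧ s(v,b) ∈ N ∧ a ≠ b} :=
              ⟨a, b, h1, h2, hne⟩
            rw [hemp] at hvD
            exact hvD
          ext f
          constructor
          · intro hf
            have hv : eL f ∈ matchedVerts N := ⟨f, hf, eL_mem f⟩
            rw [hNS, hS] at hv
            obtain ⟨a, ha⟩ := exists_partner hv
            have hfN : s(eL f, eR f) ∈ N := by rw [← edge_eq f]; exact hf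
            have heq : a = eR f := hnoD _ _ _ ha hfN
            rw [heq] at ha
            rw [edge_eq f]; exact ha
          · intro hf
            have hv : eL f ∈ S := ⟨f, hf, eL_mem f⟩
            rw [← hNS] at hv
            obtain ⟨b, hb⟩ := exists_partner hv
            have hfM : s(eL f, eR f) ∈ e '' {i | i < t} := by rw [← edge_eq f]; exact hf
            have heq : eR f = b := hnoD _ _ _ hfM hb
            rw [← heq] at hb
            rw [edge_eq f]; exact hb
        obtain ⟨x, hxD, hxmin⟩ := Set.exists_min_image _ id (Set.toFinite _) hDne
        obtain ⟨a, b, haM, hbN, hab⟩ := hxD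
        simp only [id] at hxmin
        have hxa : G.Adj x a := (SimpleGraph.mem_edgeSet G).mp (hM.1 haM)
        have hxb : G.Adj x b := (SimpleGraph.mem_edgeSet G).mp (hN.1 hbN)
        have ha_x : x ≠ a := hxa.ne
        have hb_x : x ≠ b := hxb.ne
        -- N-partner of a
        have hamN : a ∈ matchedVerts N := by
          rw [hNS, hS]; exact mem_mV_right haM
        obtain ⟨y0, hy0⟩ := exists_partner hamN
        have hy0x : y0 ≠ x := by
          intro h; rw [h] at hy0
          have hxaN : s(x,a) ∈ N := by rw [Sym2.eq_swap]; exact hy0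
          exact hab (unique_partner hN hxaN hbN)
        have hxa_lt : x < a := by
          refine lt_of_le_of_ne (hxmin a ⟨x, y0, ?_, hy0, fun h => hy0x h.symm⟩) ha_x
          rw [Sym2.eq_swap]; exact haM
        -- M-partner of b
        have hbmM : b ∈ matchedVerts (e '' {i | i < t}) := by
          rw [← hS, ← hNS]; exact mem_mV_right hbN
        obtain ⟨c, hc⟩ := exists_partner hbmM
        have hcx : c ≠ x := by
          intro h; rw [h] at hc
          have hxbM : s(x,b) ∈ e '' {i | i < t} := by rw [Sym2.eq_swap]; exact hc
          exact hab (unique_partner hM haM hxbM)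
        have hxb_lt : x < b := by
          refine lt_of_le_of_ne (hxmin b ⟨c, x, hc, ?_, hcx⟩) hb_x
          rw [Sym2.eq_swap]; exact hbN
        have hay_adj : G.Adj a y0 := (SimpleGraph.mem_edgeSet G).mp (hN.1 hy0)
        have hya : y0 ≠ a := hay_adj.ne'
        rcases lt_trichotomy b a with hba | heqba | hab'
        · -- Case 1 : b < a ; C4 on M-edges s(x,a) and s(b,c)
          have hcmN : c ∈ matchedVerts N := by
            rw [hNS, hS]; exact mem_mV_right hc
          obtain ⟨d2, hd2⟩ := exists_partner hcmN
          have hd2b : d2 ≠ b := by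
            intro h; rw [h] at hd2
            have hbcN : s(b,c) ∈ N := by rw [Sym2.eq_swap]; exact hd2
            have hbxN : s(b,x) ∈ N := by rw [Sym2.eq_swap]; exact hbN
            exact hcx (unique_partner hN hbcN hbxN)
          have hxc : x < c := by
            refine lt_of_le_of_ne (hxmin c ⟨b, d2, ?_, hd2, fun h => hd2b h.symm⟩) (Ne.symm hcx)
            rw [Sym2.eq_swap]; exact hc
          have hca : c ≠ a := by
            intro h; rw [h] at hc
            have habM : s(a,b) ∈ e '' {i | i < t} := by rw [Sym2.eq_swap]; exact hc
            have haxM : s(a,x) ∈ e '' {i | i < t} := by rw [Sym2.eq_swap]; exact haM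
            exact hb_x (unique_partner hM habM haxM).symm
          have hbc_adj : G.Adj b c := (SimpleGraph.mem_edgeSet G).mp (hM.1 hc)
          have hac_adj : G.Adj a c := by
            rcases lt_trichotomy c a with h | h | h
            · exact ((hord x c a hxc h hxa).2).symm
            · exact absurd h hca
            · exact (hord b a c hba h hbc_adj).2
          exact no_cross hord t e hmono hM hcons hxa_lt hxb_lt hxc haM hc hxb hac_adj
        · exact hab heqba.symm
        · -- Case 2 : a < b
          have hy0m : y0 ∈ matchedVerts (e '' {i | i < t}) := by
            rw [← hS, ← hNS]; exact mem_mV_right hy0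
          obtain ⟨c2, hc2⟩ := exists_partner hy0m
          have hc2a : c2 ≠ a := by
            intro h; rw [h] at hc2
            have hayM : s(a,y0) ∈ e '' {i | i < t} := by rw [Sym2.eq_swap]; exact hc2
            have haxM : s(a,x) ∈ e '' {i | i < t} := by rw [Sym2.eq_swap]; exact haM
            exact hy0x (unique_partner hM hayM haxM)
          have hxy : x < y0 := by
            refine lt_of_le_of_ne (hxmin y0 ⟨c2, a, hc2, ?_, hc2a⟩) (Ne.symm hy0x)
            rw [Sym2.eq_swap]; exact hy0
          have hyb : y0 ≠ b := by
            intro h; rw [h] at hy0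
            have hbaN : s(b,a) ∈ N := by rw [Sym2.eq_swap]; exact hy0
            have hbxN : s(b,x) ∈ N := by rw [Sym2.eq_swap]; exact hbN
            exact ha_x (unique_partner hN hbaN hbxN).symm
          have hf1f2 : s(x,b) ≠ s(a,y0) := by
            intro h
            have hx : x ∈ s(a,y0) := by rw [← h]; exact Sym2.mem_mk_left _ _
            rw [Sym2.mem_iff] at hx
            rcases hx with h' | h'
            · exact ha_x h'
            · exact hy0x h'.symm
          have hga : s(x,a) ∉ N := fun h => hab (unique_partner hN h hbN)
          have haS : a ∈ S := by rw [hS]; exact mem_mV_right haM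
          have hbS : b ∈ S := hNS ▸ mem_mV_right hbN
          have hy0S : y0 ∈ S := hNS ▸ mem_mV_right hy0
          rcases lt_trichotomy y0 a with hya' | heq' | hya'
          · -- Case 2b : x < y0 < a < b
            have hxy_adj : G.Adj x y0 := (hord x y0 a hxy hya' hxa).1
            have hab_adj : G.Adj a b := (hord x a b hxa_lt hab' hxb).2
            have hyaN : s(y0,a) ∈ N := by rw [Sym2.eq_swap]; exact hy0
            have hneq : s(x,b) ≠ s(y0,a) := fun h => hf1f2 (h.trans (Sym2.eq_swap))
            have hsw := swap_matching hN hbN hyaN hneq hxy_adj hab_adj.symm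
            have hg1N : s(x,y0) ∉ N := fun h => hyb (unique_partner hN h hbN)
            have hg2N : s(b,a) ∉ N := fun h => by
              have hbxN : s(b,x) ∈ N := by rw [Sym2.eq_swap]; exact hbN
              exact ha_x (unique_partner hN h hbxN).symm
            have hg12 : s(x,y0) ≠ s(b,a) := by
              intro h
              have hx : x ∈ s(b,a) := by rw [← h]; exact Sym2.mem_mk_left _ _
              rw [Sym2.mem_iff] at hx
              rcases hx with h' | h'
              · exact hb_x h'
              · exact ha_x h'
            have hmuEq := mu_swap S hbN hyaN hneq hg1N hg2N hg12
            have c1 : cnt S (eL s(x,b)) (eR s(x,b)) = cnt S x b := by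
              rw [eL_of_lt hxb_lt, eR_of_lt hxb_lt]
            have c2 : cnt S (eL s(y0,a)) (eR s(y0,a)) = cnt S y0 a := by
              rw [eL_of_lt hya', eR_of_lt hya']
            have c3 : cnt S (eL s(x,y0)) (eR s(x,y0)) = cnt S x y0 := by
              rw [eL_of_lt hxy, eR_of_lt hxy]
            have c4 : cnt S (eL s(b,a)) (eR s(b,a)) = cnt S a b := by
              rw [eL_mk, eR_mk, min_eq_right hab'.le, max_eq_left hab'.le]
            rw [c1, c2, c3, c4] at hmuEq
            have add1 : cnt S x b = cnt S x y0 + cnt S y0 b :=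
              cnt_add hxy.le (hya'.trans hab').le
            have add2 : cnt S y0 b = cnt S y0 a + cnt S a b := cnt_add hya'.le hab'.le
            have pos : 0 < cnt S y0 a := cnt_pos haS hya'
            have hN''M := ih (mu S (insert s(x,y0) (insert s(b,a) (N \ {s(x,b), s(y0,a)}))))
              (by omega) _ hsw.1 (hsw.2.trans hNS) le_rfl
            have hg1M : s(x,y0) ∈ e '' {i | i < t} := by
              rw [← hN''M]; exact Set.mem_insert _ _
            have hg2M : s(b,a) ∈ e '' {i | i < t} := by
              rw [← hN''M]; exact Set.mem_insert_iff.mpr (Or.inr (Set.mem_insert _ _))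
            exact no_cross hord t e hmono hM hcons hxy hxb_lt hxa_lt hg1M hg2M hxb
              hay_adj.symm
          · exact hya heq'
          · -- Case 2a : a < y0
            have hby_adj : G.Adj b y0 := by
              rcases lt_trichotomy y0 b with h | h | h
              · exact ((hord x y0 b hxy h hxb).2).symm
              · exact absurd h hyb
              · exact (hord a b y0 hab' h hay_adj).2
            have hsw := swap_matching hN hbN hy0 hf1f2 hxa hby_adj
            have hg2N : s(b,y0) ∉ N := fun h => by
              have hbxN : s(b,x) ∈ N := by rw [Sym2.eq_swap]; exact hbN
              exact hy0x (unique_partner hN h hbxN)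
            have hg12 : s(x,a) ≠ s(b,y0) := by
              intro h
              have hx : x ∈ s(b,y0) := by rw [← h]; exact Sym2.mem_mk_left _ _
              rw [Sym2.mem_iff] at hx
              rcases hx with h' | h'
              · exact hb_x h'
              · exact hy0x h'.symm
            have hmuEq := mu_swap S hbN hy0 hf1f2 hga hg2N hg12
            have c1 : cnt S (eL s(x,b)) (eR s(x,b)) = cnt S x b := by
              rw [eL_of_lt hxb_lt, eR_of_lt hxb_lt]
            have c2 : cnt S (eL s(a,y0)) (eR s(a,y0)) = cnt S a y0 := by
              rw [eL_of_lt hya', eR_of_lt hya']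
            have c3 : cnt S (eL s(x,a)) (eR s(x,a)) = cnt S x a := by
              rw [eL_of_lt hxa_lt, eR_of_lt hxa_lt]
            rw [c1, c2, c3] at hmuEq
            have hlt : mu S (insert s(x,a) (insert s(b,y0) (N \ {s(x,b), s(a,y0)}))) < mu S N := by
              rcases lt_trichotomy y0 b with hyb' | heq'' | hyb'
              · have c4 : cnt S (eL s(b,y0)) (eR s(b,y0)) = cnt S y0 b := by
                  rw [eL_mk, eR_mk, min_eq_right hyb'.le, max_eq_left hyb'.le]
                rw [c4] at hmuEq
                have add1 : cnt S x b = cnt S x a + cnt S a b := cnt_add hxa_lt.le hab'.le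
                have add2 : cnt S a b = cnt S a y0 + cnt S y0 b := cnt_add hya'.le hyb'.le
                have pos : 0 < cnt S a y0 := cnt_pos hy0S hya'
                omega
              · exact absurd heq'' hyb
              · have c4 : cnt S (eL s(b,y0)) (eR s(b,y0)) = cnt S b y0 := by
                  rw [eL_of_lt hyb', eR_of_lt hyb']
                rw [c4] at hmuEq
                have add1 : cnt S x b = cnt S x a + cnt S a b := cnt_add hxa_lt.le hab'.le
                have add2 : cnt S a y0 = cnt S a b + cnt S b y0 := cnt_add hab'.le hyb'.le
                have pos : 0 < cnt S a b := cnt_pos hbS hab'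
                omega
            have hN''M := ih (mu S (insert s(x,a) (insert s(b,y0) (N \ {s(x,b), s(a,y0)}))))
              (by omega) _ hsw.1 (hsw.2.trans hNS) le_rfl
            have hg1M : s(x,a) ∈ e '' {i | i < t} := by
              rw [← hN''M]; exact Set.mem_insert _ _
            have hg2M : s(b,y0) ∈ e '' {i | i < t} := by
              rw [← hN''M]; exact Set.mem_insert_iff.mpr (Or.inr (Set.mem_insert _ _))
            exact no_cross hord t e hmono hM hcons hxa_lt hxb_lt hxy hg1M hg2M hxb hay_adj
    have hmvS : matchedVerts M' = S := by rw [hS]; exact hmv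
    exact key (mu S M') M' hM'first hmvS le_rfl
end

section
/- Let G be a triangle-free finite simple graph with a transitive vertex ordering < and let e, e' be edges of G with l(e) < l(e'). If l(e') < r(e) < r(e'), then {e, e'} is a uniquely restricted matching in G if and only if l(e)r(e') ∉ E(G). -/
lemma mk_eL_eR {V : Type*} [LinearOrder V] (e : Sym2 V) : s(eL e, eR e) = e := by
  induction e using Sym2.ind with
  | _ x y =>
    simp only [eL, eR, Sym2.lift_mk]
    rcases le_total x y with h | h
    · rw [min_eq_left h, max_eq_right h]
    · rw [min_eq_right h, max_eq_left h, Sym2.eq_swap]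

lemma pair_disj {V : Type*} {a b c d v : V} (h1 : a ≠ c) (h2 : a ≠ d) (h3 : b ≠ c)
    (h4 : b ≠ d) (hv : v ∈ s(a, b)) : v ∉ s(c, d) := by
  intro hv'
  rcases Sym2.mem_iff.1 hv with rfl | rfl <;>
    rcases Sym2.mem_iff.1 hv' with rfl | rfl <;> simp_all

lemma key_s12 {V : Type*} (G : SimpleGraph V) (htf : G.CliqueFree 3) {a b c d : V}
    [LinearOrder V] (hord : IsTransitiveOrdering G)
    (hab : G.Adj a b) (hcd : G.Adj c d)
    (hac : a < c) (hcb : c < b) (hbd : b < d) :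
    UniquelyRestricted G {s(a, b), s(c, d)} ↔ ¬ G.Adj a d := by
  have hcd' : c < d := hcb.trans hbd
  have hab' : a < b := hac.trans hcb
  have had : a < d := hab'.trans hbd
  have hne_ab : a ≠ b := hab'.ne
  have hne_ac : a ≠ c := hac.ne
  have hne_ad : a ≠ d := had.ne
  have hne_cb : c ≠ b := hcb.ne
  have hne_cd : c ≠ d := hcd'.ne
  have hne_bd : b ≠ d := hbd.ne
  have hac_imp : G.Adj a c → G.Adj a d := fun h => (hord a c d hac hcd').1 h hcd
  have hMmatch : IsMatchingSet G {s(a, b), s(c, d)} := by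
    refine ⟨?_, ?_⟩
    · rintro f (rfl | rfl)
      · exact hab
      · exact hcd
    · rintro f (rfl | rfl) g (rfl | rfl) hfg v hvf
      · exact absurd rfl hfg
      · exact pair_disj hne_ac hne_ad hne_cb.symm hne_bd hvf
      · exact pair_disj hne_ac.symm hne_cb hne_ad.symm hne_bd.symm hvf
      · exact absurd rfl hfg
  constructor
  · -- UR → ¬ Adj a d
    rintro ⟨-, hur⟩ hadAdj
    have hcbAdj : G.Adj c b := by
      rcases (hord a c b hac hcb).2 hab with hacAdj | h
      · exact absurd (SimpleGraph.is3Clique_triple_iff.2 ⟨hacAdj, hadAdj, hcd⟩)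
          (htf {a, c, d})
      · exact h
    have hM'match : IsMatchingSet G {s(a, d), s(c, b)} := by
      refine ⟨?_, ?_⟩
      · rintro f (rfl | rfl)
        · exact hadAdj
        · exact hcbAdj
      · rintro f (rfl | rfl) g (rfl | rfl) hfg v hvf
        · exact absurd rfl hfg
        · exact pair_disj hne_ac hne_ab hne_cd.symm hne_bd.symm hvf
        · exact pair_disj hne_ac.symm hne_cd hne_ab.symm hne_bd hvf
        · exact absurd rfl hfg
    have hverts : matchedVerts {s(a, d), s(c, b)} = matchedVerts {s(a, b), s(c, d)} := by
      ext v
      simp only [matchedVerts, Set.mem_insert_iff, Set.mem_singleton_iff, Set.mem_setOf_eq]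
      constructor
      · rintro ⟨f, (rfl | rfl), hv⟩ <;> rcases Sym2.mem_iff.1 hv with rfl | rfl
        · exact ⟨s(v, b), Or.inl rfl, Sym2.mem_mk_left _ _⟩
        · exact ⟨s(c, v), Or.inr rfl, Sym2.mem_mk_right _ _⟩
        · exact ⟨s(v, d), Or.inr rfl, Sym2.mem_mk_left _ _⟩
        · exact ⟨s(a, v), Or.inl rfl, Sym2.mem_mk_right _ _⟩
      · rintro ⟨f, (rfl | rfl), hv⟩ <;> rcases Sym2.mem_iff.1 hv with rfl | rfl
        · exact ⟨s(v, d), Or.inl rfl, Sym2.mem_mk_left _ _⟩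
        · exact ⟨s(c, v), Or.inr rfl, Sym2.mem_mk_right _ _⟩
        · exact ⟨s(v, b), Or.inr rfl, Sym2.mem_mk_left _ _⟩
        · exact ⟨s(a, v), Or.inl rfl, Sym2.mem_mk_right _ _⟩
    have heqM := hur _ hM'match hverts
    have had_mem : s(a, d) ∈ ({s(a, b), s(c, d)} : Set (Sym2 V)) := by
      rw [← heqM]; exact Or.inl rfl
    rcases had_mem with h | h
    · rcases Sym2.eq_iff.1 h with ⟨-, h'⟩ | ⟨h', -⟩
      · exact hne_bd h'.symm
      · exact hne_ab h'
    · rw [Set.mem_singleton_iff] at h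
      rcases Sym2.eq_iff.1 h with ⟨h', -⟩ | ⟨h', -⟩
      · exact hne_ac h'
      · exact hne_ad h'
  · -- ¬ Adj a d → UR
    intro hnad
    refine ⟨hMmatch, ?_⟩
    intro M' hM' hverts
    have hsub : ∀ f ∈ M', ∀ v ∈ f, v = a ∨ v = b ∨ v = c ∨ v = d := by
      intro f hf v hv
      have hvm : v ∈ matchedVerts {s(a, b), s(c, d)} := hverts ▸ ⟨f, hf, hv⟩
      obtain ⟨g, hg, hvg⟩ := hvm
      rcases hg with rfl | hg
      · rcases Sym2.mem_iff.1 hvg with rfl | rfl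
        · exact Or.inl rfl
        · exact Or.inr (Or.inl rfl)
      · rw [Set.mem_singleton_iff] at hg; subst hg
        rcases Sym2.mem_iff.1 hvg with rfl | rfl
        · exact Or.inr (Or.inr (Or.inl rfl))
        · exact Or.inr (Or.inr (Or.inr rfl))
    have hmema : a ∈ matchedVerts M' := by
      rw [hverts]; exact ⟨s(a, b), Or.inl rfl, Sym2.mem_mk_left _ _⟩
    have hmemc : c ∈ matchedVerts M' := by
      rw [hverts]; exact ⟨s(c, d), Or.inr rfl, Sym2.mem_mk_left _ _⟩
    obtain ⟨f, hf, haf⟩ := hmema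
    obtain ⟨x, hx⟩ := Sym2.mem_iff_exists.1 haf
    subst hx
    have hax : G.Adj a x := hM'.1 hf
    have hxb : x = b := by
      rcases hsub _ hf x (Sym2.mem_mk_right _ _) with h | h | h | h
      · exact absurd h.symm hax.ne
      · exact h
      · rw [h] at hax; exact absurd (hac_imp hax) hnad
      · rw [h] at hax; exact absurd hax hnad
    rw [hxb] at hf
    obtain ⟨g, hg, hcg⟩ := hmemc
    obtain ⟨y, hy⟩ := Sym2.mem_iff_exists.1 hcg
    subst hy
    have hgf : s(c, y) ≠ s(a, b) := by
      intro h
      rcases Sym2.eq_iff.1 h with ⟨h', -⟩ | ⟨h', -⟩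
      · exact hne_ac h'.symm
      · exact hne_cb h'
    have hcy : G.Adj c y := hM'.1 hg
    have hyd : y = d := by
      rcases hsub _ hg y (Sym2.mem_mk_right _ _) with h | h | h | h
      · exact absurd (show y ∈ s(a, b) by rw [h]; exact Sym2.mem_mk_left a b)
          (hM'.2 _ hg _ hf hgf y (Sym2.mem_mk_right c y))
      · exact absurd (show y ∈ s(a, b) by rw [h]; exact Sym2.mem_mk_right a b)
          (hM'.2 _ hg _ hf hgf y (Sym2.mem_mk_right c y))
      · rw [h] at hcy; exact absurd rfl hcy.ne
      · exact h
    rw [hyd] at hg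
    ext k
    constructor
    · intro hh
      obtain ⟨v, hv⟩ : ∃ v, v ∈ k := ⟨k.out.1, k.out_fst_mem⟩
      rcases hsub _ hh v hv with h | h | h | h
      · have heqh : k = s(a, b) := by
          by_contra hne
          exact hM'.2 _ hh _ hf hne v hv (by rw [h]; exact Sym2.mem_mk_left a b)
        rw [heqh]; exact Or.inl rfl
      · have heqh : k = s(a, b) := by
          by_contra hne
          exact hM'.2 _ hh _ hf hne v hv (by rw [h]; exact Sym2.mem_mk_right a b)
        rw [heqh]; exact Or.inl rfl
      · have heqh : k = s(c, d) := by
          by_contra hne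
          exact hM'.2 _ hh _ hg hne v hv (by rw [h]; exact Sym2.mem_mk_left c d)
        rw [heqh]; exact Or.inr rfl
      · have heqh : k = s(c, d) := by
          by_contra hne
          exact hM'.2 _ hh _ hg hne v hv (by rw [h]; exact Sym2.mem_mk_right c d)
        rw [heqh]; exact Or.inr rfl
    · rintro (rfl | hh)
      · exact hf
      · rw [Set.mem_singleton_iff] at hh; subst hh; exact hg

theorem stmt12 {V : Type*} [Fintype V] [LinearOrder V] (G : SimpleGraph V)
    (htf : G.CliqueFree 3) (hord : IsTransitiveOrdering G) (e e' : Sym2 V)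
    (he : e ∈ G.edgeSet) (he' : e' ∈ G.edgeSet)
    (hll : eL e < eL e') (h1 : eL e' < eR e) (h2 : eR e < eR e') :
    UniquelyRestricted G {e, e'} ↔ ¬ G.Adj (eL e) (eR e') := by
  obtain ⟨a, b, heq, hLa, hRb⟩ : ∃ a b, e = s(a, b) ∧ eL e = a ∧ eR e = b :=
    ⟨eL e, eR e, (mk_eL_eR e).symm, rfl, rfl⟩
  obtain ⟨c, d, heq', hLc, hRd⟩ : ∃ c d, e' = s(c, d) ∧ eL e' = c ∧ eR e' = d :=
    ⟨eL e', eR e', (mk_eL_eR e').symm, rfl, rfl⟩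
  rw [hLa, hLc] at hll
  rw [hLc, hRb] at h1
  rw [hRb, hRd] at h2
  rw [heq] at he
  rw [heq'] at he'
  rw [hLa, hRd, heq, heq']
  exact key_s12 G htf hord he he' hll h1 h2
end

section
/- Let G be a triangle-free finite simple graph with a transitive vertex ordering < and let e₁, e₂, e₃ be pairwise distinct edges of G such that l(e₁) ≤ l(e₂) ≤ l(e₃) and r(e₁) ≤ r(e₂) ≤ r(e₃). If {e₁, e₃} is not a uniquely restricted matching in G, then neither {e₁, e₂} nor {e₂, e₃} is a uniquely restricted matching in G. -/
lemma eL_mk_s14 {V : Type*} [LinearOrder V] (u v : V) : eL s(u,v) = min u v := rfl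
lemma eR_mk_s14 {V : Type*} [LinearOrder V] (u v : V) : eR s(u,v) = max u v := rfl

lemma rep {V : Type*} [LinearOrder V] {G : SimpleGraph V} {e : Sym2 V}
    (he : e ∈ G.edgeSet) :
    G.Adj (eL e) (eR e) ∧ eL e < eR e ∧ s(eL e, eR e) = e := by
  induction e using Sym2.ind with
  | _ u v =>
    rw [SimpleGraph.mem_edgeSet] at he
    rcases lt_or_gt_of_ne he.ne with h | h
    · rw [eL_mk_s14, eR_mk_s14, min_eq_left h.le, max_eq_right h.le]
      exact ⟨he, h, rfl⟩
    · rw [eL_mk_s14, eR_mk_s14, min_eq_right h.le, max_eq_left h.le]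
      exact ⟨he.symm, h, Sym2.eq_swap⟩

lemma mv_pair {V : Type*} (a b x y : V) :
    matchedVerts {s(a,b), s(x,y)} = {a, b, x, y} := by
  ext v
  simp [matchedVerts, Sym2.mem_iff]
  tauto

lemma matching_pair {V : Type*} {G : SimpleGraph V} {a b x y : V}
    (h1 : G.Adj a b) (h2 : G.Adj x y)
    (hax : a ≠ x) (hay : a ≠ y) (hbx : b ≠ x) (hby : b ≠ y) :
    IsMatchingSet G {s(a,b), s(x,y)} := by
  constructor
  · intro e he
    rcases he with rfl | rfl
    · exact h1
    · exact h2
  · intro e he f hf hef v hv hv'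
    simp only [Set.mem_insert_iff, Set.mem_singleton_iff] at he hf
    rcases he with rfl | rfl <;> rcases hf with rfl | rfl <;>
      first
        | exact hef rfl
        | (rw [Sym2.mem_iff] at hv hv'
           rcases hv with rfl | rfl <;> rcases hv' with rfl | rfl <;> tauto)

lemma notUR_of_share {V : Type*} {G : SimpleGraph V} {e f : Sym2 V} {v : V}
    (hef : e ≠ f) (hv : v ∈ e) (hv' : v ∈ f) :
    ¬ UniquelyRestricted G {e, f} := by
  rintro ⟨⟨-, hdisj⟩, -⟩
  exact hdisj e (Set.mem_insert _ _) f (Set.mem_insert_of_mem _ rfl) hef v hv hv'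

lemma notUR_cross {V : Type*} {G : SimpleGraph V} {a b x y : V}
    (hab : a ≠ b) (hax : a ≠ x) (hay : a ≠ y) (hbx : b ≠ x) (hby : b ≠ y) (hxy : x ≠ y)
    (h1 : G.Adj a y) (h2 : G.Adj x b) :
    ¬ UniquelyRestricted G {s(a,b), s(x,y)} := by
  rintro ⟨-, hu⟩
  have hm : IsMatchingSet G {s(a,y), s(x,b)} :=
    matching_pair h1 h2 hax hab hxy.symm hby.symm
  have hverts : matchedVerts {s(a,y), s(x,b)} = matchedVerts {s(a,b), s(x,y)} := by
    rw [mv_pair, mv_pair]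
    ext v; simp; tauto
  have heq := hu _ hm hverts
  have hmem : s(a,y) ∈ ({s(a,b), s(x,y)} : Set (Sym2 V)) := heq ▸ Set.mem_insert _ _
  rcases hmem with h | h
  · rw [Sym2.eq_iff] at h
    rcases h with ⟨-, h⟩ | ⟨h, -⟩
    · exact hby h.symm
    · exact hab h
  · rw [Set.mem_singleton_iff, Sym2.eq_iff] at h
    rcases h with ⟨h, -⟩ | ⟨h, -⟩
    · exact hax h
    · exact hay h

lemma extract {V : Type*} {G : SimpleGraph V} {M' : Set (Sym2 V)} {a b c d : V}
    (hab : a ≠ b) (hac : a ≠ c) (had : a ≠ d) (hbc : b ≠ c) (hbd : b ≠ d) (hcd : c ≠ d)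
    (hM : IsMatchingSet G M') (hv : matchedVerts M' = {a, b, c, d})
    (hne : M' ≠ {s(a,b), s(c,d)}) :
    (G.Adj a c ∧ G.Adj b d) ∨ (G.Adj a d ∧ G.Adj b c) := by
  have hdisj : ∀ f ∈ M', ∀ g ∈ M', ∀ v : V, v ∈ f → v ∈ g → f = g := by
    intro f hf g hg v hvf hvg
    by_contra hne'
    exact hM.2 f hf g hg hne' v hvf hvg
  have hclass : ∀ v : V, ∀ f ∈ M', v ∈ f → v ∈ ({a, b, c, d} : Set V) := by
    intro v f hf hvf
    rw [← hv]
    exact ⟨f, hf, hvf⟩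
  have hedge : ∀ v ∈ ({a, b, c, d} : Set V),
      ∃ w, s(v, w) ∈ M' ∧ G.Adj v w ∧ w ∈ ({a, b, c, d} : Set V) := by
    intro v hv'
    rw [← hv] at hv'
    obtain ⟨f, hfM, hvf⟩ := hv'
    refine ⟨Sym2.Mem.other hvf, ?_, ?_, ?_⟩
    · rw [Sym2.other_spec hvf]; exact hfM
    · have hE := hM.1 hfM
      rw [← Sym2.other_spec hvf] at hE
      exact hE
    · exact hclass _ f hfM (Sym2.other_mem hvf)
  obtain ⟨t, htM, hat, htmem⟩ := hedge a (by simp)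
  simp only [Set.mem_insert_iff, Set.mem_singleton_iff] at htmem
  rcases htmem with rfl | rfl | rfl | rfl
  · exact absurd rfl hat.ne
  · -- t = b : then the edge at d must be s(d,c), and M' = {s(a,b), s(c,d)}
    obtain ⟨u, huM, hdu, humem⟩ := hedge d (by simp)
    simp only [Set.mem_insert_iff, Set.mem_singleton_iff] at humem
    rcases humem with rfl | rfl | rfl | rfl
    · -- u = a
      have := hdisj _ huM _ htM u (by simp) (by simp)
      rw [Sym2.eq_iff] at this
      rcases this with ⟨h1, -⟩ | ⟨h1, -⟩
      · exact absurd h1.symm had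
      · exact absurd h1.symm hbd
    · -- u = b
      have := hdisj _ huM _ htM u (by simp) (by simp)
      rw [Sym2.eq_iff] at this
      rcases this with ⟨h1, -⟩ | ⟨h1, -⟩
      · exact absurd h1.symm had
      · exact absurd h1 hbd.symm
    · -- u = c : now show M' = {s(a,b), s(c,d)}, contradiction
      exfalso
      apply hne
      ext k
      simp only [Set.mem_insert_iff, Set.mem_singleton_iff]
      constructor
      · intro hk
        have hp := hclass k.out.1 k hk (Sym2.out_fst_mem k)
        simp only [Set.mem_insert_iff, Set.mem_singleton_iff] at hp
        rcases hp with h | h | h | h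
        · left; exact hdisj _ hk _ htM _ (h ▸ Sym2.out_fst_mem k) (by simp)
        · left; exact hdisj _ hk _ htM _ (h ▸ Sym2.out_fst_mem k) (by simp)
        · right
          have := hdisj _ hk _ huM _ (h ▸ Sym2.out_fst_mem k) (by simp)
          rw [this]; exact Sym2.eq_swap
        · right
          have := hdisj _ hk _ huM _ (h ▸ Sym2.out_fst_mem k) (by simp)
          rw [this]; exact Sym2.eq_swap
      · rintro (rfl | rfl)
        · exact htM
        · rw [Sym2.eq_swap]; exact huM
    · exact absurd rfl hdu.ne
  · -- t = c : get edge at b, must be s(b,d)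
    obtain ⟨u, huM, hbu, humem⟩ := hedge b (by simp)
    simp only [Set.mem_insert_iff, Set.mem_singleton_iff] at humem
    rcases humem with rfl | rfl | rfl | rfl
    · -- u = a
      have := hdisj _ huM _ htM u (by simp) (by simp)
      rw [Sym2.eq_iff] at this
      rcases this with ⟨h1, -⟩ | ⟨h1, -⟩
      · exact absurd h1.symm hab
      · exact absurd h1 hbc
    · exact absurd rfl hbu.ne
    · -- u = c
      have := hdisj _ huM _ htM u (by simp) (by simp)
      rw [Sym2.eq_iff] at this
      rcases this with ⟨h1, -⟩ | ⟨h1, -⟩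
      · exact absurd h1.symm hab
      · exact absurd h1 hbc
    · exact Or.inl ⟨hat, hbu⟩
  · -- t = d : get edge at b, must be s(b,c)
    obtain ⟨u, huM, hbu, humem⟩ := hedge b (by simp)
    simp only [Set.mem_insert_iff, Set.mem_singleton_iff] at humem
    rcases humem with rfl | rfl | rfl | rfl
    · -- u = a
      have := hdisj _ huM _ htM u (by simp) (by simp)
      rw [Sym2.eq_iff] at this
      rcases this with ⟨h1, -⟩ | ⟨h1, -⟩
      · exact absurd h1.symm hab
      · exact absurd h1 hbd
    · exact absurd rfl hbu.ne
    · exact Or.inr ⟨hat, hbu⟩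
    · -- u = d
      have := hdisj _ huM _ htM u (by simp) (by simp)
      rw [Sym2.eq_iff] at this
      rcases this with ⟨h1, -⟩ | ⟨h1, -⟩
      · exact absurd h1.symm hab
      · exact absurd h1 hbd

theorem stmt14 {V : Type*} [Fintype V] [LinearOrder V] (G : SimpleGraph V)
    (htf : G.CliqueFree 3) (hord : IsTransitiveOrdering G) (e₁ e₂ e₃ : Sym2 V)
    (he₁ : e₁ ∈ G.edgeSet) (he₂ : e₂ ∈ G.edgeSet) (he₃ : e₃ ∈ G.edgeSet)
    (h12 : e₁ ≠ e₂) (h13 : e₁ ≠ e₃) (h23 : e₂ ≠ e₃)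
    (hl12 : eL e₁ ≤ eL e₂) (hl23 : eL e₂ ≤ eL e₃)
    (hr12 : eR e₁ ≤ eR e₂) (hr23 : eR e₂ ≤ eR e₃)
    (h : ¬ UniquelyRestricted G {e₁, e₃}) :
    ¬ UniquelyRestricted G {e₁, e₂} ∧ ¬ UniquelyRestricted G {e₂, e₃} := by
  classical
  have F : ∀ u v w : V, u < v → v < w → G.Adj u v → G.Adj v w → False := by
    intro u v w h1 h2 huv hvw
    exact htf {u, v, w}
      (SimpleGraph.is3Clique_triple_iff.mpr ⟨huv, (hord u v w h1 h2).1 huv hvw, hvw⟩)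
  obtain ⟨hA1, hlt1, hE1⟩ := rep he₁
  obtain ⟨hA2, hlt2, hE2⟩ := rep he₂
  obtain ⟨hA3, hlt3, hE3⟩ := rep he₃
  set a := eL e₁ with ha
  set b := eR e₁ with hb
  set x := eL e₂ with hx
  set y := eR e₂ with hy
  set c := eL e₃ with hc
  set d := eR e₃ with hd
  by_cases hacq : a = c
  · -- all three edges share their left endpoint
    have hxa : x = a := le_antisymm (hacq ▸ hl23) hl12
    constructor
    · exact notUR_of_share h12 (v := a) (by rw [← hE1]; simp)
        (by rw [← hE2, Sym2.mem_iff]; left; exact hxa.symm)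
    · exact notUR_of_share h23 (v := a) (by rw [← hE2, Sym2.mem_iff]; left; exact hxa.symm)
        (by rw [← hE3, Sym2.mem_iff]; left; exact hacq)
  by_cases hbdq : b = d
  · have hyb : y = b := le_antisymm (hbdq ▸ hr23) hr12
    constructor
    · exact notUR_of_share h12 (v := b) (by rw [← hE1]; simp)
        (by rw [← hE2, Sym2.mem_iff]; right; exact hyb.symm)
    · exact notUR_of_share h23 (v := b) (by rw [← hE2, Sym2.mem_iff]; right; exact hyb.symm)
        (by rw [← hE3, Sym2.mem_iff]; right; exact hbdq)
  -- main case: a < c and b < d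
  have hac : a < c := lt_of_le_of_ne (hl12.trans hl23) hacq
  have hbd : b < d := lt_of_le_of_ne (hr12.trans hr23) hbdq
  have hbc : b ≠ c := by
    intro hq
    exact F a b d hlt1 hbd hA1 (by rw [hq]; exact hA3)
  have had : a < d := hac.trans hlt3
  -- {e₁, e₃} is a matching
  have hmatch : IsMatchingSet G {e₁, e₃} := by
    rw [← hE1, ← hE3]
    exact matching_pair hA1 hA3 hac.ne had.ne hbc hbd.ne
  have h' : ∃ M', IsMatchingSet G M' ∧ matchedVerts M' = matchedVerts {e₁, e₃} ∧
      M' ≠ {e₁, e₃} := by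
    by_contra hcon
    push_neg at hcon
    exact h ⟨hmatch, fun M' h1 h2 => hcon M' h1 h2⟩
  obtain ⟨M', hM'm, hM'v, hM'ne⟩ := h'
  have hvts : matchedVerts M' = {a, b, c, d} := by
    rw [hM'v, ← hE1, ← hE3, mv_pair]
  have hcross : (G.Adj a c ∧ G.Adj b d) ∨ (G.Adj a d ∧ G.Adj b c) := by
    refine extract hlt1.ne hac.ne had.ne hbc hbd.ne hlt3.ne hM'm hvts ?_
    rw [hE1, hE3]
    exact hM'ne
  have hADad : G.Adj a d ∧ G.Adj b c := by
    rcases hcross with ⟨h1, -⟩ | hgood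
    · exact absurd h1 (fun hq => F a c d hac hlt3 hq hA3)
    · exact hgood
  obtain ⟨hAad, hAbc⟩ := hADad
  have hcb : c < b := by
    rcases hbc.lt_or_gt with hq | hq
    · exact absurd hAbc (fun h' => F a b c hlt1 hq hA1 h')
    · exact hq
  constructor
  · -- {e₁, e₂} is not uniquely restricted
    by_cases hxa : x = a
    · exact notUR_of_share h12 (v := a) (by rw [← hE1]; simp)
        (by rw [← hE2, Sym2.mem_iff]; left; exact hxa.symm)
    by_cases hyb : y = b
    · exact notUR_of_share h12 (v := b) (by rw [← hE1]; simp)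
        (by rw [← hE2, Sym2.mem_iff]; right; exact hyb.symm)
    have hax : a < x := lt_of_le_of_ne hl12 (Ne.symm hxa)
    have hby : b < y := lt_of_le_of_ne hr12 (Ne.symm hyb)
    have hxb : x < b := lt_of_le_of_lt hl23 hcb
    have hay : a < y := hax.trans hlt2
    have hAay : G.Adj a y := by
      rcases eq_or_lt_of_le hr23 with hyd | hyd
      · rw [hyd]; exact hAad
      · rcases (hord a y d hay hyd).2 hAad with h' | h'
        · exact h'
        · exact absurd h' (fun hq => F x y d hlt2 hyd hA2 hq)
    have hAxb : G.Adj x b := by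
      rcases (hord x b y hxb hby).2 hA2 with h' | h'
      · exact h'
      · exact absurd h' (fun hq => F a b y hlt1 hby hA1 hq)
    rw [← hE1, ← hE2]
    exact notUR_cross hlt1.ne hax.ne hay.ne hxb.ne' hby.ne hlt2.ne hAay hAxb
  · -- {e₂, e₃} is not uniquely restricted
    by_cases hxc : x = c
    · exact notUR_of_share h23 (v := c) (by rw [← hE2, Sym2.mem_iff]; left; exact hxc.symm)
        (by rw [← hE3]; simp)
    by_cases hyd : y = d
    · exact notUR_of_share h23 (v := d) (by rw [← hE2, Sym2.mem_iff]; right; exact hyd.symm)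
        (by rw [← hE3]; simp)
    have hxc' : x < c := lt_of_le_of_ne hl23 hxc
    have hyd' : y < d := lt_of_le_of_ne hr23 hyd
    have hcy : c < y := lt_of_lt_of_le hcb hr12
    have hAcy : G.Adj c y := by
      rcases (hord x c y hxc' hcy).2 hA2 with h' | h'
      · exact absurd h' (fun hq => F x c d hxc' hlt3 hq hA3)
      · exact h'
    have hAxd : G.Adj x d := by
      rcases eq_or_lt_of_le hl12 with hxa | hxa
      · rw [← hxa]; exact hAad
      · rcases (hord a x d hxa (hxc'.trans hlt3)).2 hAad with h' | h'
        · exact absurd h' (fun hq => F a x y hxa hlt2 hq hA2)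
        · exact h'
    rw [← hE2, ← hE3]
    exact notUR_cross hlt2.ne hxc'.ne (hxc'.trans hlt3).ne hcy.ne' hyd'.ne hlt3.ne hAxd hAcy
end
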